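/- arXiv:2107.07982 — 10 statements merged into one kernel-verified Lean document; each statement's English description precedes it below -/
import Mathlib

section
/- Let b : ℤ → [0,∞) be not all zero, let tf be the associated max-times tropical Laurent series with domain D, and let Y be the set of points in the interior of D at which tf is not differentiable. Then every point of Y is isolated in Y (i.e., each y ∈ Y has a neighborhood containing no other point of Y), and every accumulation point of Y belongs to {inf Y, sup Y}. -/
open Filter

/-- The set of values `b_j * x^j` over indices `j` with `b_j > 0`. -/
noncomputable def tropSet (b : ℤ → ℝ) (x : ℝ) : Set ℝ :=
  Set.range fun j : {j : ℤ // 0 < b j} => b j.1 * x ^ (j.1 : ℤ)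

/-- The domain of the max-times tropical Laurent series. -/
noncomputable def tropDomain (b : ℤ → ℝ) : Set ℝ :=
  {x : ℝ | 0 ≤ x ∧ BddAbove (tropSet b x)}

/-- The max-times tropical Laurent series. -/
noncomputable def tropFn (b : ℤ → ℝ) (x : ℝ) : ℝ :=
  sSup (tropSet b x)

/-- The set of points in the interior of the domain at which the tropical
Laurent series is not differentiable. -/
noncomputable def tropNondiff (b : ℤ → ℝ) : Set ℝ :=
  {y : ℝ | y ∈ interior (tropDomain b) ∧ ¬ DifferentiableAt ℝ (tropFn b) y}

/-!
Near a point `x₀` of the interior of the domain, choose `p < x₀ < q` in the domain. The terms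
`b_j y^j` are bounded at `p` and `q`, so for `y` close to `x₀` they decay geometrically in `|j|`
and only finitely many of them can reach the size of a fixed positive term. Hence near `x₀` the
series is the maximum of finitely many monomials, which is differentiable wherever a single
monomial attains the maximum; two distinct monomials agree at most once on `(0, ∞)`, so the
points of non-differentiability are locally finite.

The domain meets `(0, ∞)` in an interval (each `y ↦ y^j` is convex there), so its interior is
an interval containing the non-differentiability points, and by local finiteness every
accumulation point lies outside it. Such a point is a lower or an upper bound of the set, hence
its infimum or supremum.
-/

open Set Topology

theorem differentiableAt_finset_sup'_of_injOn {E ι : Type*} [NormedAddCommGroup E]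
    [NormedSpace ℝ E] {S : Finset ι} (hS : S.Nonempty) {g : ι → E → ℝ} {x : E}
    (hg : ∀ i ∈ S, DifferentiableAt ℝ (g i) x) (hx : InjOn (g · x) S) :
    DifferentiableAt ℝ (fun y => S.sup' hS (g · y)) x := by
  obtain ⟨i, hi, himax⟩ := S.exists_max_image (g · x) hS
  have hev : ∀ᶠ y in 𝓝 x, ∀ j ∈ S, g j y ≤ g i y := by
    refine (eventually_all_finset S).2 fun j hj => ?_
    rcases eq_or_ne j i with rfl | hji
    · exact .of_forall fun _ => le_rfl
    · have hlt : g j x < g i x := (himax j hj).lt_of_ne fun h => hji (hx hj hi h)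
      exact ((hg j hj).continuousAt.eventually_lt (hg i hi).continuousAt hlt).mono
        fun _ => le_of_lt
  refine (hg i hi).congr_of_eventuallyEq ?_
  filter_upwards [hev] with y hy
  exact le_antisymm (S.sup'_le hS _ hy) (S.le_sup' (g · y) hi)

theorem AccPt.eq_csInf_or_eq_csSup {α : Type*} [ConditionallyCompleteLinearOrder α]
    [TopologicalSpace α] [OrderTopology α] {s Y : Set α} {x : α} (hacc : AccPt x (𝓟 Y))
    (hs : s.OrdConnected) (hY : Y ⊆ s) (hx : x ∉ s) : x = sInf Y ∨ x = sSup Y := by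
  have hcl : x ∈ closure Y := mem_closure_iff_clusterPt.2 hacc.clusterPt
  have hne : Y.Nonempty := closure_nonempty_iff.1 ⟨x, hcl⟩
  have hbound : x ∈ lowerBounds Y ∨ x ∈ upperBounds Y := by
    by_contra! h
    simp only [mem_lowerBounds, mem_upperBounds, not_forall, not_le] at h
    obtain ⟨⟨y₁, hy₁, h₁⟩, ⟨y₂, hy₂, h₂⟩⟩ := h
    exact hx (hs.out (hY hy₁) (hY hy₂) ⟨h₁.le, h₂.le⟩)
  rcases hbound with h | h
  · exact .inl ((isGLB_of_mem_closure h hcl).csInf_eq hne).symm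
  · exact .inr ((isLUB_of_mem_closure h hcl).csSup_eq hne).symm

theorem mul_zpow_eq_mul_zpow_subsingleton {c d : ℝ} (hc : 0 < c) {i j : ℤ} (hij : i ≠ j) :
    {x : ℝ | 0 < x ∧ c * x ^ i = d * x ^ j}.Subsingleton := by
  have key : ∀ z : ℝ, 0 < z → c * z ^ i = d * z ^ j → z ^ (i - j) = d / c := by
    intro z hz he
    rw [zpow_sub₀ hz.ne', eq_div_iff hc.ne', div_mul_eq_mul_div,
      div_eq_iff (zpow_ne_zero _ hz.ne'), mul_comm, he]
  rintro x ⟨hx, hxe⟩ y ⟨hy, hye⟩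
  exact (zpow_left_inj₀ hx.le hy.le (sub_ne_zero.2 hij)).1
    ((key x hx hxe).trans (key y hy hye).symm)

theorem mul_zpow_le_mul_pow_natAbs {c M p q y ρ : ℝ} {j : ℤ} (hp : 0 < p) (hq : 0 < q)
    (hy : 0 < y) (hc : 0 ≤ c) (hpM : c * p ^ j ≤ M) (hqM : c * q ^ j ≤ M)
    (hyq : y / q ≤ ρ) (hpy : p / y ≤ ρ) :
    c * y ^ j ≤ M * ρ ^ j.natAbs := by
  have hM : 0 ≤ M := (by positivity : 0 ≤ c * q ^ j).trans hqM
  obtain ⟨n, rfl | rfl⟩ := Int.eq_nat_or_neg j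
  · calc c * y ^ (n : ℤ) = c * q ^ (n : ℤ) * (y / q) ^ n := by
          rw [div_pow, zpow_natCast, zpow_natCast]; field_simp
      _ ≤ M * ρ ^ n := by gcongr
      _ = M * ρ ^ (n : ℤ).natAbs := by rw [Int.natAbs_natCast]
  · calc c * y ^ (-n : ℤ) = c * p ^ (-n : ℤ) * (p / y) ^ n := by
          rw [div_pow, zpow_neg, zpow_neg, zpow_natCast, zpow_natCast]; field_simp
      _ ≤ M * ρ ^ n := by gcongr
      _ = M * ρ ^ (-n : ℤ).natAbs := by rw [Int.natAbs_neg, Int.natAbs_natCast]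

section Tropical

variable {b : ℤ → ℝ}

theorem tropTerm_mem {j : ℤ} (hj : 0 < b j) (x : ℝ) : b j * x ^ j ∈ tropSet b x :=
  ⟨⟨j, hj⟩, rfl⟩

theorem ordConnected_tropDomain_inter_Ioi (b : ℤ → ℝ) :
    (tropDomain b ∩ Ioi 0).OrdConnected := by
  refine ⟨fun u ⟨hu, hu0⟩ v ⟨hv, _⟩ z hz =>
    ⟨⟨hu0.le.trans hz.1, ?_⟩, hu0.trans_le hz.1⟩⟩
  obtain ⟨Mu, hMu⟩ := hu.2
  obtain ⟨Mv, hMv⟩ := hv.2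
  refine ⟨max Mu Mv, ?_⟩
  rintro _ ⟨⟨j, hj⟩, rfl⟩
  have hzj : z ^ j ≤ max (u ^ j) (v ^ j) :=
    (convexOn_zpow j).le_on_segment hu0 (hu0.trans_le (hz.1.trans hz.2)) (Icc_subset_segment hz)
  calc b j * z ^ j ≤ b j * max (u ^ j) (v ^ j) := by gcongr
    _ = max (b j * u ^ j) (b j * v ^ j) := mul_max_of_nonneg _ _ hj.le
    _ ≤ max Mu Mv := max_le_max (hMu (tropTerm_mem hj u)) (hMv (tropTerm_mem hj v))

theorem interior_tropDomain_subset_Ioi (b : ℤ → ℝ) : interior (tropDomain b) ⊆ Ioi 0 :=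
  interior_Ici (a := (0 : ℝ)) ▸ interior_mono fun _ hx => hx.1

theorem ordConnected_interior_tropDomain (b : ℤ → ℝ) :
    (interior (tropDomain b)).OrdConnected := by
  have h : interior (tropDomain b) = interior (tropDomain b ∩ Ioi 0) := by
    rw [interior_inter, interior_Ioi, inter_eq_left.2 (interior_tropDomain_subset_Ioi b)]
  exact h ▸ (ordConnected_tropDomain_inter_Ioi b).interior

theorem exists_mem_tropDomain_lt_lt {x : ℝ} (hx : x ∈ interior (tropDomain b)) :
    ∃ p q, 0 < p ∧ p < x ∧ x < q ∧ p ∈ tropDomain b ∧ q ∈ tropDomain b := by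
  have hnhds : tropDomain b ∩ Ioi 0 ∈ 𝓝 x :=
    inter_mem (mem_interior_iff_mem_nhds.1 hx) (Ioi_mem_nhds (interior_tropDomain_subset_Ioi b hx))
  obtain ⟨l, r, ⟨hl, hr⟩, hsub⟩ := mem_nhds_iff_exists_Ioo_subset.1 hnhds
  have hp := hsub (show (l + x) / 2 ∈ Ioo l r by constructor <;> linarith)
  have hq := hsub (show (x + r) / 2 ∈ Ioo l r by constructor <;> linarith)
  exact ⟨_, _, hp.2, by linarith, by linarith, hp.1, hq.1⟩

theorem exists_eventually_tropTerm_lt {x₀ : ℝ} (hx₀ : x₀ ∈ interior (tropDomain b))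
    {m : ℝ} (hm : 0 < m) :
    ∃ N : ℕ, ∀ᶠ y in 𝓝 x₀, ∀ j, 0 < b j → N ≤ j.natAbs → b j * y ^ j < m := by
  obtain ⟨p, q, hp, hpx, hxq, ⟨-, Mp, hMp⟩, ⟨-, Mq, hMq⟩⟩ :=
    exists_mem_tropDomain_lt_lt hx₀
  obtain ⟨u, hpu, hux⟩ := exists_between hpx
  obtain ⟨v, hxv, hvq⟩ := exists_between hxq
  set ρ := max (v / q) (p / u)
  have hρ0 : 0 ≤ ρ := le_max_of_le_left (div_nonneg (by linarith) (by linarith))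
  have hρ1 : ρ < 1 :=
    max_lt ((div_lt_one (by linarith)).2 hvq) ((div_lt_one (by linarith)).2 hpu)
  have hlim : Tendsto (fun n : ℕ => max Mp Mq * ρ ^ n) atTop (𝓝 0) := by
    simpa using (tendsto_pow_atTop_nhds_zero_of_lt_one hρ0 hρ1).const_mul (max Mp Mq)
  obtain ⟨N, hN⟩ := eventually_atTop.1 (hlim.eventually (gt_mem_nhds hm))
  refine ⟨N, ?_⟩
  filter_upwards [Ioo_mem_nhds hux hxv] with y hy j hj hNj
  have hy0 : 0 < y := by linarith [hy.1]
  refine lt_of_le_of_lt ?_ (hN _ hNj)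
  refine mul_zpow_le_mul_pow_natAbs hp (by linarith) hy0 hj.le
    ((hMp (tropTerm_mem hj p)).trans (le_max_left _ _))
    ((hMq (tropTerm_mem hj q)).trans (le_max_right _ _)) ?_ ?_
  · exact (div_le_div_of_nonneg_right hy.2.le (by linarith)).trans (le_max_left _ _)
  · exact (div_le_div_of_nonneg_left hp.le (by linarith) hy.1.le).trans (le_max_right _ _)

theorem exists_eventually_tropFn_eq_sup' (hne : ∃ j, 0 < b j) {x₀ : ℝ}
    (hx₀ : x₀ ∈ interior (tropDomain b)) :
    ∃ S : Finset ℤ, ∃ hS : S.Nonempty, (∀ j ∈ S, 0 < b j) ∧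
      ∀ᶠ y in 𝓝 x₀, tropFn b y = S.sup' hS (fun j => b j * y ^ j) := by
  obtain ⟨j₀, hj₀⟩ := hne
  have hx₀0 : 0 < x₀ := interior_tropDomain_subset_Ioi b hx₀
  have hm : 0 < b j₀ * x₀ ^ j₀ / 2 := by positivity
  have hlow : ∀ᶠ y in 𝓝 x₀, b j₀ * x₀ ^ j₀ / 2 < b j₀ * y ^ j₀ :=
    ((continuousAt_zpow₀ x₀ j₀ (.inl hx₀0.ne')).const_mul (b j₀)).eventually
      (lt_mem_nhds (by linarith))
  obtain ⟨N, htail⟩ := exists_eventually_tropTerm_lt hx₀ hm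
  set N' := max N j₀.natAbs
  set S := (Finset.Icc (-(N' : ℤ)) N').filter (0 < b ·)
  have hmemS : ∀ {j}, j ∈ S ↔ j.natAbs ≤ N' ∧ 0 < b j := by
    intro j
    rw [Finset.mem_filter, Finset.mem_Icc]
    exact and_congr_left' (by omega)
  have hj₀S : j₀ ∈ S := hmemS.2 ⟨le_max_right _ _, hj₀⟩
  refine ⟨S, ⟨j₀, hj₀S⟩, fun j hj => (hmemS.1 hj).2, ?_⟩
  filter_upwards [hlow, htail] with y hlow htail
  refine IsGreatest.csSup_eq ⟨?_, ?_⟩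
  · obtain ⟨j, hj, he⟩ := S.exists_mem_eq_sup' ⟨j₀, hj₀S⟩ (fun j => b j * y ^ j)
    exact he ▸ tropTerm_mem (hmemS.1 hj).2 y
  · rintro _ ⟨⟨j, hj⟩, rfl⟩
    by_cases hjS : j ∈ S
    · exact S.le_sup' (fun j => b j * y ^ j) hjS
    · have hNj : N ≤ j.natAbs :=
        (le_max_left _ _).trans (not_le.1 fun h => hjS (hmemS.2 ⟨h, hj⟩)).le
      exact ((htail j hj hNj).trans hlow).le.trans (S.le_sup' (fun j => b j * y ^ j) hj₀S)

theorem exists_mem_nhds_inter_tropNondiff_finite (hne : ∃ j, 0 < b j) {x₀ : ℝ}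
    (hx₀ : x₀ ∈ interior (tropDomain b)) :
    ∃ U ∈ 𝓝 x₀, (U ∩ tropNondiff b).Finite := by
  obtain ⟨S, hS, hSpos, heq⟩ := exists_eventually_tropFn_eq_sup' hne hx₀
  obtain ⟨U, hU, hUo, hx₀U⟩ :=
    eventually_nhds_iff.1 (heq.and (Ioi_mem_nhds (interior_tropDomain_subset_Ioi b hx₀)))
  refine ⟨U, hUo.mem_nhds hx₀U, ?_⟩
  have hcross : (⋃ ij ∈ S.offDiag,
      {x : ℝ | 0 < x ∧ b ij.1 * x ^ ij.1 = b ij.2 * x ^ ij.2}).Finite :=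
    S.offDiag.finite_toSet.biUnion fun ij hij =>
      (mul_zpow_eq_mul_zpow_subsingleton (hSpos _ (Finset.mem_offDiag.1 hij).1)
        (Finset.mem_offDiag.1 hij).2.2).finite
  refine hcross.subset ?_
  rintro x ⟨hxU, -, hxnd⟩
  obtain ⟨-, hx0⟩ := hU x hxU
  by_contra hx
  have hinj : InjOn (fun j => b j * x ^ j) S := by
    intro i hi j hj (he : b i * x ^ i = b j * x ^ j)
    by_contra hij
    exact hx (mem_biUnion (x := (i, j)) (Finset.mem_offDiag.2 ⟨hi, hj, hij⟩) ⟨hx0, he⟩)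
  have hmax : DifferentiableAt ℝ (fun y => S.sup' hS (fun j => b j * y ^ j)) x :=
    differentiableAt_finset_sup'_of_injOn hS
      (fun j _ => (differentiableAt_zpow.2 (.inl hx0.ne')).const_mul (b j)) hinj
  exact hxnd (hmax.congr_of_eventuallyEq
    (eventually_of_mem (hUo.mem_nhds hxU) fun y hy => (hU y hy).1))

end Tropical

theorem statement2_general (b : ℤ → ℝ) (hne : ∃ j, 0 < b j) :
    (∀ y ∈ tropNondiff b, ¬ AccPt y (𝓟 (tropNondiff b))) ∧
    (∀ x : ℝ, AccPt x (𝓟 (tropNondiff b)) →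
      x = sInf (tropNondiff b) ∨ x = sSup (tropNondiff b)) := by
  have hiso : ∀ x ∈ interior (tropDomain b), ¬ AccPt x (𝓟 (tropNondiff b)) := by
    intro x hx hacc
    obtain ⟨U, hU, hfin⟩ := exists_mem_nhds_inter_tropNondiff_finite hne hx
    exact Set.Infinite.of_accPt (hacc.nhds_inter hU) hfin
  exact ⟨fun y hy => hiso y hy.1, fun x hacc => hacc.eq_csInf_or_eq_csSup
    (ordConnected_interior_tropDomain b) (fun _ hy => hy.1) (fun hx => hiso x hx hacc)⟩

/-- every point of `Y` is isolated in `Y`, and every accumulation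
point of `Y` belongs to `{inf Y, sup Y}`. -/
theorem statement2 (b : ℤ → ℝ) (hb : ∀ j, 0 ≤ b j) (hne : ∃ j, 0 < b j) :
    (∀ y ∈ tropNondiff b, ¬ AccPt y (𝓟 (tropNondiff b))) ∧
    (∀ x : ℝ, AccPt x (𝓟 (tropNondiff b)) →
      x = sInf (tropNondiff b) ∨ x = sSup (tropNondiff b)) :=
  statement2_general b hne
end

section
/- Let p < q be integers and let B_p, …, B_q be n×n complex matrices with ‖B_i‖ ≤ 1 for all p ≤ i ≤ q, ‖B_p‖ = ‖B_q‖ = 1, and B_p and B_q invertible. Then every λ ∈ ℂ with λ ≠ 0 and det(∑_{i=p}^{q} B_i λ^i) = 0 satisfies (1 + κ(B_p))^{−1} < |λ| < 1 + κ(B_q). -/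
/-!
If `‖λ‖ ≥ 1 + κ(B_q)`, factor out the leading term:
`∑ B_i λ^i = λ^q B_q (1 + E)` with `E = ∑_{i<q} λ^(i-q) B_q⁻¹ B_i`. Since
`‖B_q⁻¹ B_i‖ ≤ κ(B_q) ≤ ‖λ‖ - 1`, telescoping the geometric sum gives
`‖E‖ ≤ (‖λ‖ - 1) ∑_{i<q} ‖λ‖^(i-q) = 1 - ‖λ‖^(p-q) < 1`, so `1 + E` is invertible
by the Neumann series and the determinant cannot vanish. The lower bound is the upper
bound for the reversed polynomial `∑ B_{-i} μ^i` at `μ = λ⁻¹`.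
-/

/-- An `n×n` complex matrix viewed as a linear operator on `ℂⁿ` with the
Euclidean norm, so that `‖·‖` is the induced (spectral) operator norm. -/
noncomputable abbrev EucOp (n : ℕ) :=
  EuclideanSpace ℂ (Fin n) →L[ℂ] EuclideanSpace ℂ (Fin n)

/-- The condition number `κ(B) = ‖B‖·‖B⁻¹‖` of an (invertible) matrix. -/
noncomputable def kappa {n : ℕ} (B : EucOp n) : ℝ :=
  ‖B‖ * ‖Ring.inverse B‖

open Finset

theorem sum_Ico_zpow_mul_sub_one {K : Type*} [Field K] {a : K} (ha : a ≠ 0) {p q : ℤ}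
    (hpq : p ≤ q) : (∑ i ∈ Ico p q, a ^ i) * (a - 1) = a ^ q - a ^ p := by
  induction q, hpq using Int.leInduction with
  | base => simp
  | succ q hpq ih =>
    rw [← Order.succ_eq_add_one, ← insert_Ico_right_eq_Ico_succ hpq,
      sum_insert right_notMem_Ico, add_mul, ih, Order.succ_eq_add_one, zpow_add_one₀ ha]
    ring

theorem mul_sum_Ico_zpow_sub_lt_one {a κ : ℝ} (hκ : 0 ≤ κ) (ha : 1 + κ ≤ a) {p q : ℤ}
    (hpq : p ≤ q) : κ * ∑ i ∈ Ico p q, a ^ (i - q) < 1 := by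
  have ha0 : 0 < a := by linarith
  have hsum : ∑ i ∈ Ico p q, a ^ (i - q) = (∑ i ∈ Ico p q, a ^ i) / a ^ q := by
    rw [sum_div]
    exact sum_congr rfl fun i _ => zpow_sub₀ ha0.ne' i q
  calc κ * ∑ i ∈ Ico p q, a ^ (i - q)
      ≤ (a - 1) * ∑ i ∈ Ico p q, a ^ (i - q) := by gcongr; linarith
    _ = 1 - a ^ p / a ^ q := by
        rw [hsum, mul_div_assoc', mul_comm, sum_Ico_zpow_mul_sub_one ha0.ne' hpq, sub_div,
          div_self (zpow_pos ha0 q).ne']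
    _ < 1 := sub_lt_self 1 (div_pos (zpow_pos ha0 p) (zpow_pos ha0 q))

section

variable {𝕜 A : Type*}

theorem sum_Icc_zpow_smul_eq_smul_mul_one_add [Field 𝕜] [Ring A] [Algebra 𝕜 A] {p q : ℤ}
    (hpq : p ≤ q) {B : ℤ → A} {C : A} (hC : B q * C = 1) {c : 𝕜} (hc : c ≠ 0) :
    ∑ i ∈ Icc p q, c ^ i • B i = c ^ q • (B q * (1 + ∑ i ∈ Ico p q, c ^ (i - q) • (C * B i))) := by
  rw [← Ico_insert_right hpq, sum_insert right_notMem_Ico, mul_add, mul_one, smul_add,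
    mul_sum, smul_sum]
  congr 1
  refine sum_congr rfl fun i _ => ?_
  rw [mul_smul_comm, ← mul_assoc, hC, one_mul, smul_smul, ← zpow_add₀ hc, add_sub_cancel]

theorem sum_Icc_zpow_smul_eq_sum_Icc_neg [DivisionRing 𝕜] [AddCommMonoid A] [Module 𝕜 A]
    (p q : ℤ) (B : ℤ → A) (c : 𝕜) :
    ∑ i ∈ Icc p q, c ^ i • B i = ∑ i ∈ Icc (-q) (-p), c⁻¹ ^ i • B (-i) := by
  refine sum_nbij' (- ·) (- ·) (fun i hi => ?_) (fun i hi => ?_) (fun i _ => neg_neg i)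
    (fun i _ => neg_neg i) (fun i _ => ?_)
  · simp only [mem_Icc] at hi ⊢; omega
  · simp only [mem_Icc] at hi ⊢; omega
  · rw [inv_zpow', neg_neg]

theorem norm_sum_Ico_zpow_smul_inverse_mul_lt_one [NormedField 𝕜] [NormedRing A]
    [NormedAlgebra 𝕜 A] {p q : ℤ} (hpq : p ≤ q) {B : ℤ → A}
    (hB : ∀ i ∈ Ico p q, ‖B i‖ ≤ ‖B q‖) {c : 𝕜}
    (hc : 1 + ‖B q‖ * ‖Ring.inverse (B q)‖ ≤ ‖c‖) :
    ‖∑ i ∈ Ico p q, c ^ (i - q) • (Ring.inverse (B q) * B i)‖ < 1 := by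
  set κ := ‖B q‖ * ‖Ring.inverse (B q)‖
  calc ‖∑ i ∈ Ico p q, c ^ (i - q) • (Ring.inverse (B q) * B i)‖
      ≤ ∑ i ∈ Ico p q, ‖c‖ ^ (i - q) * κ := by
        refine (norm_sum_le _ _).trans (sum_le_sum fun i hi => ?_)
        rw [norm_smul, norm_zpow]
        gcongr
        calc ‖Ring.inverse (B q) * B i‖ ≤ ‖Ring.inverse (B q)‖ * ‖B i‖ := norm_mul_le _ _
          _ ≤ ‖Ring.inverse (B q)‖ * ‖B q‖ := by gcongr; exact hB i hi
          _ = κ := mul_comm _ _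
    _ = κ * ∑ i ∈ Ico p q, ‖c‖ ^ (i - q) := by rw [← sum_mul, mul_comm]
    _ < 1 := mul_sum_Ico_zpow_sub_lt_one (by positivity) hc hpq

theorem isUnit_sum_Icc_zpow_smul_of_one_add_le [NormedField 𝕜] [NormedRing A]
    [NormedAlgebra 𝕜 A] [CompleteSpace A] {p q : ℤ} (hpq : p ≤ q) {B : ℤ → A}
    (hBq : IsUnit (B q)) (hB : ∀ i ∈ Ico p q, ‖B i‖ ≤ ‖B q‖) {c : 𝕜}
    (hc : 1 + ‖B q‖ * ‖Ring.inverse (B q)‖ ≤ ‖c‖) :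
    IsUnit (∑ i ∈ Icc p q, c ^ i • B i) := by
  have hc0 : c ≠ 0 := norm_pos_iff.1 <| by
    have : 0 ≤ ‖B q‖ * ‖Ring.inverse (B q)‖ := by positivity
    linarith
  have hE := isUnit_one_sub_of_norm_lt_one <| (norm_neg
    (∑ i ∈ Ico p q, c ^ (i - q) • (Ring.inverse (B q) * B i))).symm ▸
      norm_sum_Ico_zpow_smul_inverse_mul_lt_one hpq hB hc
  rw [sub_neg_eq_add] at hE
  rw [sum_Icc_zpow_smul_eq_smul_mul_one_add hpq (Ring.mul_inverse_cancel _ hBq) hc0,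
    ← Units.smul_mk0 (zpow_ne_zero q hc0)]
  exact (hBq.mul hE).smul _

end

theorem IsUnit.det_toLinearMap_ne_zero {R M : Type*} [CommRing R] [Nontrivial R]
    [TopologicalSpace M] [AddCommGroup M] [ContinuousAdd M] [Module R M] {f : M →L[R] M}
    (hf : IsUnit f) : LinearMap.det (f : M →ₗ[R] M) ≠ 0 :=
  (LinearMap.isUnit_det _ (hf.map ContinuousLinearMap.toLinearMapRingHom)).ne_zero

theorem norm_lt_one_add_kappa_of_det_eq_zero {n : ℕ} {p q : ℤ} (hpq : p ≤ q) {B : ℤ → EucOp n}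
    (hBq : IsUnit (B q)) (hB : ∀ i ∈ Ico p q, ‖B i‖ ≤ ‖B q‖) {c : ℂ}
    (hdet : LinearMap.det (∑ i ∈ Icc p q, c ^ i • B i : EucOp n).toLinearMap = 0) :
    ‖c‖ < 1 + kappa (B q) := by
  by_contra! h
  exact (isUnit_sum_Icc_zpow_smul_of_one_add_le hpq hBq hB h).det_toLinearMap_ne_zero hdet

theorem inv_one_add_kappa_lt_norm_of_det_eq_zero {n : ℕ} {p q : ℤ} (hpq : p ≤ q)
    {B : ℤ → EucOp n} (hBp : IsUnit (B p)) (hB : ∀ i ∈ Ioc p q, ‖B i‖ ≤ ‖B p‖) {c : ℂ}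
    (hc : c ≠ 0)
    (hdet : LinearMap.det (∑ i ∈ Icc p q, c ^ i • B i : EucOp n).toLinearMap = 0) :
    (1 + kappa (B p))⁻¹ < ‖c‖ := by
  have hrev := norm_lt_one_add_kappa_of_det_eq_zero (B := fun i => B (-i)) (neg_le_neg hpq)
    (by rwa [neg_neg]) (fun i hi => by
      rw [neg_neg]; exact hB (-i) (by simp only [mem_Ico, mem_Ioc] at hi ⊢; omega))
    (c := c⁻¹) (by rwa [← sum_Icc_zpow_smul_eq_sum_Icc_neg])
  rw [neg_neg, norm_inv] at hrev
  exact (inv_lt_comm₀ (norm_pos_iff.2 hc) (by unfold kappa; positivity)).1 hrev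

theorem statement10_general (n : ℕ) (p q : ℤ) (hpq : p < q)
    (B : ℤ → EucOp n)
    (hbd : ∀ i : ℤ, p ≤ i → i ≤ q → ‖B i‖ ≤ 1)
    (hBp : ‖B p‖ = 1) (hBq : ‖B q‖ = 1)
    (hBpU : IsUnit (B p)) (hBqU : IsUnit (B q))
    (lam : ℂ) (hlam : lam ≠ 0)
    (hdet : LinearMap.det
      (∑ i ∈ Finset.Icc p q, lam ^ i • B i : EucOp n).toLinearMap = 0) :
    (1 + kappa (B p))⁻¹ < ‖lam‖ ∧ ‖lam‖ < 1 + kappa (B q) := by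
  refine ⟨inv_one_add_kappa_lt_norm_of_det_eq_zero hpq.le hBpU (fun i hi => ?_) hlam hdet,
    norm_lt_one_add_kappa_of_det_eq_zero hpq.le hBqU (fun i hi => ?_) hdet⟩
  · rw [mem_Ioc] at hi; exact hBp ▸ hbd i hi.1.le hi.2
  · rw [mem_Ico] at hi; exact hBq ▸ hbd i hi.1 hi.2.le

/-- if `‖B_i‖ ≤ 1` for `p ≤ i ≤ q`, `‖B_p‖ = ‖B_q‖ = 1`, and
`B_p, B_q` are invertible, then every nonzero `λ` with
`det(∑_{i=p}^q B_i λ^i) = 0` satisfies `(1+κ(B_p))⁻¹ < |λ| < 1+κ(B_q)`. -/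
theorem statement10 (n : ℕ) (hn : 1 ≤ n) (p q : ℤ) (hpq : p < q)
    (B : ℤ → EucOp n)
    (hbd : ∀ i : ℤ, p ≤ i → i ≤ q → ‖B i‖ ≤ 1)
    (hBp : ‖B p‖ = 1) (hBq : ‖B q‖ = 1)
    (hBpU : IsUnit (B p)) (hBqU : IsUnit (B q))
    (lam : ℂ) (hlam : lam ≠ 0)
    (hdet : LinearMap.det
      (∑ i ∈ Finset.Icc p q, lam ^ i • B i : EucOp n).toLinearMap = 0) :
    (1 + kappa (B p))⁻¹ < ‖lam‖ ∧ ‖lam‖ < 1 + kappa (B q) :=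
  statement10_general n p q hpq B hbd hBp hBq hBpU hBqU lam hlam hdet
end

section
/- Let p < q be integers, m = q − p, and let B_p, …, B_q be n×n complex matrices with ‖B_i‖ ≤ 1 for all i and ‖B_p‖ = ‖B_q‖ = 1. Set S(μ) = ∑_{i=p}^{q} B_i μ^i. (a) If B_p is invertible and 0 < |μ| ≤ (1 + κ(B_p))^{−1}, then S(μ) is invertible and ‖S(μ)^{−1}‖ ≤ κ(B_p)·|μ|^{−p}·(1 − |μ|) / (1 − |μ|·(1 + κ(B_p)(1 − |μ|^{m}))). (b) If B_q is invertible and |μ| ≥ 1 + κ(B_q), then S(μ) is invertible and ‖S(μ)^{−1}‖ ≤ κ(B_q)·|μ|^{−q}·(|μ| − 1) / (|μ| − 1 − κ(B_q)(1 − |μ|^{−m})). -/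
open Finset

theorem Ring.inverse_smul {𝕜 A : Type*} [Field 𝕜] [Ring A] [Algebra 𝕜 A] {c : 𝕜} (hc : c ≠ 0)
    (a : A) : Ring.inverse (c • a) = c⁻¹ • Ring.inverse a := by
  have hc' : IsUnit (algebraMap 𝕜 A c) := (isUnit_iff_ne_zero.2 hc).map _
  rw [Algebra.smul_def, Ring.inverse_mul (.inl hc'), Algebra.smul_def, Algebra.commutes]
  congr 1
  calc Ring.inverse (algebraMap 𝕜 A c)
      = Ring.inverse (algebraMap 𝕜 A c) * (algebraMap 𝕜 A c * algebraMap 𝕜 A c⁻¹) := by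
        rw [← map_mul, mul_inv_cancel₀ hc, map_one, mul_one]
    _ = algebraMap 𝕜 A c⁻¹ := Ring.inverse_mul_cancel_left _ _ hc'

section NormedRing

variable {R : Type*} [NormedRing R]

theorem IsUnit.add_of_norm_inverse_mul_lt [HasSummableGeomSeries R] {a r : R} (ha : IsUnit a)
    (h : ‖Ring.inverse a‖ * ‖r‖ < 1) : IsUnit (a + r) := by
  nontriviality R
  have hpos : 0 < ‖Ring.inverse a‖ := by
    rw [Ring.inverse_of_isUnit ha]; exact Units.norm_pos _
  refine (ha.unit.add r ?_).isUnit
  rwa [← Ring.inverse_of_isUnit ha, ← one_div, lt_div_iff₀' hpos]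

theorem norm_inverse_add_le {a r : R} {ρ : ℝ} (ha : IsUnit a) (har : IsUnit (a + r))
    (hr : ‖r‖ ≤ ρ) (hρ : ‖Ring.inverse a‖ * ρ < 1) :
    ‖Ring.inverse (a + r)‖ ≤ ‖Ring.inverse a‖ / (1 - ‖Ring.inverse a‖ * ρ) := by
  set y := Ring.inverse (a + r)
  have hy : y = Ring.inverse a - Ring.inverse a * r * y := by
    refine eq_sub_of_add_eq ?_
    calc y + Ring.inverse a * r * y = Ring.inverse a * ((a + r) * y) := by
          rw [add_mul, mul_add, Ring.inverse_mul_cancel_left _ _ ha, mul_assoc]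
      _ = Ring.inverse a := by rw [Ring.mul_inverse_cancel _ har, mul_one]
  have hle : ‖y‖ ≤ ‖Ring.inverse a‖ + ‖Ring.inverse a‖ * ρ * ‖y‖ :=
    calc ‖y‖ = ‖Ring.inverse a - Ring.inverse a * r * y‖ := congrArg norm hy
      _ ≤ ‖Ring.inverse a‖ + ‖Ring.inverse a‖ * ‖r‖ * ‖y‖ :=
          (norm_sub_le _ _).trans (add_le_add le_rfl norm_mul₃_le)
      _ ≤ ‖Ring.inverse a‖ + ‖Ring.inverse a‖ * ρ * ‖y‖ := by gcongr
  rw [le_div_iff₀ (sub_pos.2 hρ)]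
  linarith

end NormedRing

theorem Finset.sum_Icc_add_natCast {M : Type*} [AddCommMonoid M] (f : ℤ → M) (p : ℤ) (m : ℕ) :
    ∑ i ∈ Icc p (p + m), f i = ∑ k ∈ range (m + 1), f (p + k) := by
  refine (sum_nbij' (fun k : ℕ ↦ p + k) (fun i ↦ (i - p).toNat) ?_ ?_ ?_ ?_ fun _ _ ↦ rfl).symm <;>
    intro a ha <;> simp only [mem_Icc, mem_range] at ha ⊢ <;> omega

theorem Finset.sum_Icc_neg {M : Type*} [AddCommMonoid M] (f : ℤ → M) (p q : ℤ) :
    ∑ i ∈ Icc (-q) (-p), f (-i) = ∑ i ∈ Icc p q, f i :=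
  sum_nbij' Neg.neg Neg.neg (by intro a ha; simp only [mem_Icc] at ha ⊢; omega)
    (by intro a ha; simp only [mem_Icc] at ha ⊢; omega) (fun a _ ↦ neg_neg a)
    (fun a _ ↦ neg_neg a) fun _ _ ↦ rfl

theorem sum_Icc_zpow_smul_eq {𝕜 E : Type*} [Field 𝕜] [AddCommGroup E] [Module 𝕜 E] {μ : 𝕜}
    (hμ : μ ≠ 0) (B : ℤ → E) (p : ℤ) (m : ℕ) :
    ∑ i ∈ Icc p (p + m), μ ^ i • B i =
      μ ^ p • (B p + ∑ k ∈ range m, μ ^ (k + 1) • B (p + (k + 1 : ℕ))) := by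
  rw [sum_Icc_add_natCast, sum_range_succ', add_comm, smul_add, smul_sum]
  simp only [zpow_add₀ hμ, zpow_natCast, mul_smul, Nat.cast_zero, add_zero]

theorem norm_sum_range_pow_succ_smul_le {𝕜 E : Type*} [NormedField 𝕜] [SeminormedAddCommGroup E]
    [NormedSpace 𝕜 E] (μ : 𝕜) {C : ℕ → E} {m : ℕ} (hC : ∀ k < m, ‖C k‖ ≤ 1) :
    ‖∑ k ∈ range m, μ ^ (k + 1) • C k‖ ≤ ‖μ‖ * ∑ k ∈ range m, ‖μ‖ ^ k := by
  rw [mul_sum]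
  refine (norm_sum_le _ _).trans (sum_le_sum fun k hk ↦ ?_)
  rw [norm_smul, norm_pow, ← pow_succ']
  exact mul_le_of_le_one_right (by positivity) (hC k (mem_range.1 hk))

theorem mul_mul_geom_sum_lt_one {K x : ℝ} (m : ℕ) (hK : 0 < K) (hx : 0 < x)
    (hxK : x ≤ (1 + K)⁻¹) : K * (x * ∑ k ∈ range m, x ^ k) < 1 := by
  rw [← one_div, le_div_iff₀ (by positivity)] at hxK
  calc K * (x * ∑ k ∈ range m, x ^ k) = K * x * ∑ k ∈ range m, x ^ k := by ring
    _ ≤ (1 - x) * ∑ k ∈ range m, x ^ k := by gcongr; linarith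
    _ = 1 - x ^ m := mul_neg_geom_sum x m
    _ < 1 := by linarith [pow_pos hx m]

theorem div_one_sub_mul_mul_geom_sum {K x : ℝ} (m : ℕ) (hx : x ≠ 1) :
    K / (1 - K * (x * ∑ k ∈ range m, x ^ k)) =
      K * (1 - x) / (1 - x * (1 + K * (1 - x ^ m))) := by
  rw [← mul_neg_geom_sum,
    show 1 - x * (1 + K * ((1 - x) * ∑ k ∈ range m, x ^ k)) =
      (1 - K * (x * ∑ k ∈ range m, x ^ k)) * (1 - x) by ring,
    mul_div_mul_right _ _ (sub_ne_zero.2 hx.symm)]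

section NormedAlgebra

variable {𝕜 A : Type*} [NormedField 𝕜] [NormedRing A] [NormedAlgebra 𝕜 A]
  [HasSummableGeomSeries A] [Nontrivial A]

theorem sum_zpow_smul_isUnit_and_norm_inverse_le_of_isUnit_first {p q : ℤ} (hpq : p ≤ q)
    {B : ℤ → A} (hB : ∀ i, p < i → i ≤ q → ‖B i‖ ≤ 1) (hBp : IsUnit (B p)) {μ : 𝕜} (hμ0 : 0 < ‖μ‖)
    (hμ : ‖μ‖ ≤ (1 + ‖Ring.inverse (B p)‖)⁻¹) :
    IsUnit (∑ i ∈ Icc p q, μ ^ i • B i) ∧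
      ‖Ring.inverse (∑ i ∈ Icc p q, μ ^ i • B i)‖ ≤
        ‖Ring.inverse (B p)‖ * ‖μ‖ ^ (-p) * (1 - ‖μ‖) /
          (1 - ‖μ‖ * (1 + ‖Ring.inverse (B p)‖ * (1 - ‖μ‖ ^ (q - p)))) := by
  obtain ⟨m, rfl⟩ := Int.le.dest hpq
  have hμne : μ ≠ 0 := norm_pos_iff.1 hμ0
  set K := ‖Ring.inverse (B p)‖
  set x := ‖μ‖
  set R := ∑ k ∈ range m, μ ^ (k + 1) • B (p + (k + 1 : ℕ))
  have hK : 0 < K := norm_pos_iff.2 hBp.ringInverse.ne_zero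
  have hx1 : x < 1 := hμ.trans_lt (inv_lt_one_of_one_lt₀ (by linarith))
  have hR : ‖R‖ ≤ x * ∑ k ∈ range m, x ^ k :=
    norm_sum_range_pow_succ_smul_le μ fun k hk ↦ hB _ (by omega) (by omega)
  have hKR := mul_mul_geom_sum_lt_one m hK hμ0 hμ
  have hunit : IsUnit (B p + R) :=
    hBp.add_of_norm_inverse_mul_lt ((mul_le_mul_of_nonneg_left hR hK.le).trans_lt hKR)
  rw [sum_Icc_zpow_smul_eq hμne, add_sub_cancel_left]
  refine ⟨hunit.smul (Units.mk0 _ (zpow_ne_zero p hμne)), ?_⟩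
  rw [Ring.inverse_smul (zpow_ne_zero p hμne), norm_smul, norm_inv, norm_zpow, ← zpow_neg,
    zpow_natCast]
  calc x ^ (-p) * ‖Ring.inverse (B p + R)‖
      ≤ x ^ (-p) * (K / (1 - K * (x * ∑ k ∈ range m, x ^ k))) :=
        mul_le_mul_of_nonneg_left (norm_inverse_add_le hBp hunit hR hKR) (by positivity)
    _ = _ := by rw [div_one_sub_mul_mul_geom_sum m hx1.ne]; ring

theorem sum_zpow_smul_isUnit_and_norm_inverse_le_of_isUnit_last {p q : ℤ} (hpq : p ≤ q)
    {B : ℤ → A} (hB : ∀ i, p ≤ i → i < q → ‖B i‖ ≤ 1) (hBq : IsUnit (B q)) {μ : 𝕜}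
    (hμ : 1 + ‖Ring.inverse (B q)‖ ≤ ‖μ‖) :
    IsUnit (∑ i ∈ Icc p q, μ ^ i • B i) ∧
      ‖Ring.inverse (∑ i ∈ Icc p q, μ ^ i • B i)‖ ≤
        ‖Ring.inverse (B q)‖ * ‖μ‖ ^ (-q) * (‖μ‖ - 1) /
          (‖μ‖ - 1 - ‖Ring.inverse (B q)‖ * (1 - ‖μ‖ ^ (-(q - p)))) := by
  have hμ0 : 0 < ‖μ‖ := by linarith [norm_nonneg (Ring.inverse (B q))]
  have hrev := sum_zpow_smul_isUnit_and_norm_inverse_le_of_isUnit_first (neg_le_neg hpq)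
    (B := fun i ↦ B (-i)) (fun i h₁ h₂ ↦ hB _ (by omega) (by omega)) (by simpa using hBq) (μ := μ⁻¹)
    (by simpa using hμ0) (by rw [norm_inv, neg_neg]; exact inv_anti₀ (by positivity) hμ)
  simp only [inv_zpow', sum_Icc_neg (fun i ↦ μ ^ i • B i), neg_neg, norm_inv] at hrev
  refine ⟨hrev.1, hrev.2.trans_eq ?_⟩
  rw [show -p - -q = q - p by ring, ← mul_div_mul_right _ _ hμ0.ne']
  congr 1
  · field_simp
  · field_simp
    ring

end NormedAlgebra

theorem kappa_of_norm_eq_one {n : ℕ} {B : EucOp n} (h : ‖B‖ = 1) :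
    kappa B = ‖Ring.inverse B‖ := by
  rw [kappa, h, one_mul]

/-- lower bounds on `S(μ) = ∑_{i=p}^q B_i μ^i`: (a) if `B_p` is
invertible and `0 < |μ| ≤ (1+κ(B_p))⁻¹` then `S(μ)` is invertible with the
stated bound on `‖S(μ)⁻¹‖`; (b) if `B_q` is invertible and `|μ| ≥ 1+κ(B_q)`
then `S(μ)` is invertible with the stated bound on `‖S(μ)⁻¹‖`. -/
theorem statement12 (n : ℕ) (hn : 1 ≤ n) (p q : ℤ) (hpq : p < q)
    (B : ℤ → EucOp n)
    (hbd : ∀ i : ℤ, p ≤ i → i ≤ q → ‖B i‖ ≤ 1)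
    (hBp : ‖B p‖ = 1) (hBq : ‖B q‖ = 1) :
    (∀ μ : ℂ, IsUnit (B p) → 0 < ‖μ‖ → ‖μ‖ ≤ (1 + kappa (B p))⁻¹ →
      IsUnit (∑ i ∈ Finset.Icc p q, μ ^ i • B i) ∧
      ‖Ring.inverse (∑ i ∈ Finset.Icc p q, μ ^ i • B i)‖ ≤
        kappa (B p) * ‖μ‖ ^ (-p) * (1 - ‖μ‖) /
          (1 - ‖μ‖ * (1 + kappa (B p) * (1 - ‖μ‖ ^ (q - p))))) ∧
    (∀ μ : ℂ, IsUnit (B q) → 1 + kappa (B q) ≤ ‖μ‖ →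
      IsUnit (∑ i ∈ Finset.Icc p q, μ ^ i • B i) ∧
      ‖Ring.inverse (∑ i ∈ Finset.Icc p q, μ ^ i • B i)‖ ≤
        kappa (B q) * ‖μ‖ ^ (-q) * (‖μ‖ - 1) /
          (‖μ‖ - 1 - kappa (B q) * (1 - ‖μ‖ ^ (-(q - p))))) := by
  have : Nonempty (Fin n) := ⟨⟨0, hn⟩⟩
  rw [kappa_of_norm_eq_one hBp, kappa_of_norm_eq_one hBq]
  exact ⟨fun μ hBp_unit hμ0 hμ ↦
      sum_zpow_smul_isUnit_and_norm_inverse_le_of_isUnit_first hpq.le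
        (fun i hpi hiq ↦ hbd i hpi.le hiq) hBp_unit hμ0 hμ,
    fun μ hBq_unit hμ ↦
      sum_zpow_smul_isUnit_and_norm_inverse_le_of_isUnit_last hpq.le
        (fun i hpi hiq ↦ hbd i hpi hiq.le) hBq_unit hμ⟩
end

section
/- Let c > 0 and δ > 0 with δ ≤ (1 + 2c)^{−2}. Define the quadratic polynomial p(r) = r² − (2 + (1−δ)/(δ(1+c)))·r + 1/δ, and set f = ((1+2c)δ + 1 − √((1−δ)(1 − (1+2c)²δ))) / (2δ(1+c)) and g = 1/(δf). Then p(f) = p(g) = 0; moreover 1 < 1 + c ≤ f ≤ g, and 1/(f−1) + 1/(g−1) = 1/c. -/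
/-!
With `B = 2 + (1 - δ) / (δ (1 + c))` and `t = √((1 - δ)(1 - (1 + 2c)²δ)) / (δ (1 + c))` one has
`t² = B² - 4/δ`, so `f = (B - t) / 2` and `g = (B + t) / 2` are the two roots of
`r² - B r + 1/δ`. The bound `1 + c ≤ f` is exactly AM-GM for the two factors under the square
root, and the reciprocal sum follows from Vieta's formulas `f + g = B`, `f g = 1/δ`.
-/

section MonicQuadratic

variable {B P t r : ℝ}

theorem sub_div_two_sq_sub_mul_add_eq_zero (ht : t ^ 2 = B ^ 2 - 4 * P) :
    ((B - t) / 2) ^ 2 - B * ((B - t) / 2) + P = 0 := by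
  linear_combination ht / 4

theorem div_eq_sub_of_sq_sub_mul_add_eq_zero (hr : r ^ 2 - B * r + P = 0) (hr0 : r ≠ 0) :
    P / r = B - r := by
  rw [div_eq_iff hr0]
  linear_combination hr

theorem sub_sq_sub_mul_add_eq_zero (hr : r ^ 2 - B * r + P = 0) :
    (B - r) ^ 2 - B * (B - r) + P = 0 := by
  linear_combination hr

theorem one_div_sub_one_add_one_div_sub_one_of_sq_sub_mul_add_eq_zero
    (hr : r ^ 2 - B * r + P = 0) (hr1 : r ≠ 1) (hBr1 : B - r ≠ 1) :
    1 / (r - 1) + 1 / (B - r - 1) = (B - 2) / (P - B + 1) := by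
  have hprod : (r - 1) * (B - r - 1) = P - B + 1 := by linear_combination -hr
  rw [← hprod, div_add_div _ _ (sub_ne_zero.2 hr1) (sub_ne_zero.2 hBr1)]
  ring

end MonicQuadratic

theorem Real.sqrt_mul_le_half_add {x y : ℝ} (hxy : 0 ≤ x + y) : √(x * y) ≤ (x + y) / 2 :=
  Real.sqrt_le_iff.2 ⟨by linarith, by nlinarith [sq_nonneg (x - y)]⟩

namespace Statement13

variable {c δ : ℝ}

theorem discrim_eq (hδ : δ ≠ 0) (hc : 1 + c ≠ 0) :
    (2 + (1 - δ) / (δ * (1 + c))) ^ 2 - 4 * (1 / δ) =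
      (1 - δ) * (1 - (1 + 2 * c) ^ 2 * δ) / (δ * (1 + c)) ^ 2 := by
  field_simp
  ring

theorem root_eq_sub_div_two (s : ℝ) (hδ : δ ≠ 0) (hc : 1 + c ≠ 0) :
    ((1 + 2 * c) * δ + 1 - s) / (2 * δ * (1 + c)) =
      (2 + (1 - δ) / (δ * (1 + c)) - s / (δ * (1 + c))) / 2 := by
  field_simp
  ring

theorem one_add_le_root (hc : 0 < c) (hδ : 0 < δ)
    (hdisc : 0 ≤ 1 - (1 + 2 * c) ^ 2 * δ) :
    1 + c ≤ ((1 + 2 * c) * δ + 1 -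
      √((1 - δ) * (1 - (1 + 2 * c) ^ 2 * δ))) / (2 * δ * (1 + c)) := by
  have hamgm := Real.sqrt_mul_le_half_add (x := 1 - δ) (y := 1 - (1 + 2 * c) ^ 2 * δ)
    (by nlinarith)
  rw [le_div_iff₀ (by positivity)]
  linarith

theorem sub_two_div_eq_one_div (hc : 0 < c) (hδ : 0 < δ) (hδ1 : δ < 1) :
    (2 + (1 - δ) / (δ * (1 + c)) - 2) / (1 / δ - (2 + (1 - δ) / (δ * (1 + c))) + 1) = 1 / c := by
  have hsub : 2 + (1 - δ) / (δ * (1 + c)) - 2 = (1 - δ) / (δ * (1 + c)) := by ring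
  have hden : 1 / δ - (2 + (1 - δ) / (δ * (1 + c))) + 1 = c * ((1 - δ) / (δ * (1 + c))) := by
    field_simp
    ring
  rw [hsub, hden, div_mul_cancel_right₀ (div_pos (by linarith) (by positivity)).ne', one_div]

end Statement13

/-- for `c > 0` and `0 < δ ≤ (1+2c)^{−2}`, the quadratic
`p(r) = r² − (2 + (1−δ)/(δ(1+c)))r + 1/δ` has roots
`f = ((1+2c)δ + 1 − √((1−δ)(1−(1+2c)²δ)))/(2δ(1+c))` and `g = 1/(δf)`, with
`1 < 1+c ≤ f ≤ g` and `1/(f−1) + 1/(g−1) = 1/c`. -/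
theorem statement13 (c δ : ℝ) (hc : 0 < c) (hδ : 0 < δ)
    (hδc : δ ≤ ((1 + 2 * c) ^ 2)⁻¹) :
    ∀ f g : ℝ,
      f = ((1 + 2 * c) * δ + 1 -
            Real.sqrt ((1 - δ) * (1 - (1 + 2 * c) ^ 2 * δ))) / (2 * δ * (1 + c)) →
      g = 1 / (δ * f) →
      (f ^ 2 - (2 + (1 - δ) / (δ * (1 + c))) * f + 1 / δ = 0 ∧
       g ^ 2 - (2 + (1 - δ) / (δ * (1 + c))) * g + 1 / δ = 0) ∧
      (1 < 1 + c ∧ 1 + c ≤ f ∧ f ≤ g) ∧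
      1 / (f - 1) + 1 / (g - 1) = 1 / c := by
  intro f g hf hg
  have hsq : 1 ≤ (1 + 2 * c) ^ 2 := by nlinarith
  have hdisc : 0 ≤ 1 - (1 + 2 * c) ^ 2 * δ := by
    rw [← one_div, le_div_iff₀ (by positivity)] at hδc
    linarith
  have hδ1 : δ < 1 := by nlinarith
  have hb : 0 < 1 + c := by linarith
  set B := 2 + (1 - δ) / (δ * (1 + c))
  set t := √((1 - δ) * (1 - (1 + 2 * c) ^ 2 * δ)) / (δ * (1 + c))
  have ht : t ^ 2 = B ^ 2 - 4 * (1 / δ) := by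
    rw [Statement13.discrim_eq hδ.ne' hb.ne', div_pow, Real.sq_sqrt (by nlinarith)]
  have hfB : f = (B - t) / 2 := hf.trans (Statement13.root_eq_sub_div_two _ hδ.ne' hb.ne')
  have hcf : 1 + c ≤ f := hf ▸ Statement13.one_add_le_root hc hδ hdisc
  have hpf : f ^ 2 - B * f + 1 / δ = 0 := hfB ▸ sub_div_two_sq_sub_mul_add_eq_zero ht
  have hgB : g = B - f := by
    rw [hg, div_mul_eq_div_div, div_eq_sub_of_sq_sub_mul_add_eq_zero hpf (by linarith)]
  have hfg : f ≤ g := by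
    have : 0 ≤ t := by positivity
    linarith
  refine ⟨⟨hpf, hgB ▸ sub_sq_sub_mul_add_eq_zero hpf⟩, ⟨by linarith, hcf, hfg⟩, ?_⟩
  rw [hgB, one_div_sub_one_add_one_div_sub_one_of_sq_sub_mul_add_eq_zero hpf (by linarith)
    (by linarith), Statement13.sub_two_div_eq_one_div hc hδ hδ1]
end

section
/- Let n ≥ 1, let B : ℤ → M_n(ℂ), let k < K be integers, α > 0, δ₋, δ₊ ∈ (0,1), and set c = κ(B_K) and M := ‖B_k‖α^k. Assume: B_k and B_K are invertible; ‖B_k‖α^k = ‖B_K‖α^K = M > 0; ‖B_i‖α^i ≤ M for all i ∈ ℤ; ‖B_i‖α^i ≤ M·δ₋^{k−i} for all i < k; ‖B_i‖α^i ≤ M·δ₊^{i−K} for all i > K; and δ₊ ≤ (1 + 2c)^{−2}. Then for every λ ∈ ℂ with (1 + 2c)·α < |λ| < (1 + 2c)^{−1}·α/δ₊, the series ∑_{i∈ℤ} B_i λ^i converges absolutely and its sum F(λ) is an invertible matrix; in particular F has no eigenvalue in the open annulus {λ : (1+2c)α < |λ| < (1+2c)^{−1}α/δ₊}. -/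
/-!
With `β = |λ|/α`, the tropical bounds give `‖B_i λ^i‖ ≤ ‖B_K‖ |λ|^K β^{i-K}` for `i < K` and
`‖B_i λ^i‖ ≤ ‖B_K‖ |λ|^K (δ₊β)^{i-K}` for `i > K`. On the annulus both ratios `β⁻¹` and `δ₊β` are
below `(1 + 2κ)⁻¹`, so each geometric tail has mass below `‖B_K‖ |λ|^K / (2κ)`. Hence
`F(λ) = λ^K B_K + R` with `‖(λ^K B_K)⁻¹‖ ‖R‖ < 1`, and `F(λ)` is a unit by the Neumann series.
-/

theorem Ring.inverse_smul_s14 {𝕜 A : Type*} [Field 𝕜] [Semiring A] [Algebra 𝕜 A] {x : A}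
    (hx : IsUnit x) {z : 𝕜} (hz : z ≠ 0) : Ring.inverse (z • x) = z⁻¹ • Ring.inverse x := by
  obtain ⟨u, rfl⟩ := hx
  let w : Aˣ := ⟨z • u, z⁻¹ • ↑u⁻¹, by simp [smul_smul, hz], by simp [smul_smul, hz]⟩
  rw [show z • (u : A) = w from rfl, Ring.inverse_unit, Ring.inverse_unit]
  rfl

theorem isUnit_add_of_norm_inverse_mul_lt_one {A : Type*} [NormedRing A]
    [HasSummableGeomSeries A] {x r : A} (hx : IsUnit x) (h : ‖Ring.inverse x‖ * ‖r‖ < 1) :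
    IsUnit (x + r) := by
  have hsmall : ‖-(Ring.inverse x * r)‖ < 1 := by
    rw [norm_neg]
    exact (norm_mul_le _ _).trans_lt h
  have hfactor : x + r = x * (1 - -(Ring.inverse x * r)) := by
    rw [sub_neg_eq_add, mul_add, mul_one, ← mul_assoc, Ring.mul_inverse_cancel x hx, one_mul]
  rw [hfactor]
  exact hx.mul (isUnit_one_sub_of_norm_lt_one hsmall)

theorem isUnit_tsum_of_dominant {ι A : Type*} [DecidableEq ι] [NormedRing A] [CompleteSpace A]
    {f : ι → A} (hf : Summable (‖f ·‖)) {j : ι} (hj : IsUnit (f j))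
    (h : ‖Ring.inverse (f j)‖ * (∑' i, ‖f i‖ - ‖f j‖) < 1) : IsUnit (∑' i, f i) := by
  have hrest : ∑' i, ‖f i‖ - ‖f j‖ = ∑' i, ‖if i = j then 0 else f i‖ := by
    simp only [apply_ite, norm_zero, hf.tsum_eq_add_tsum_ite j, add_sub_cancel_left]
  rw [hf.of_norm.tsum_eq_add_tsum_ite j]
  refine isUnit_add_of_norm_inverse_mul_lt_one hj (h.trans_le' ?_)
  gcongr
  rw [hrest]
  refine norm_tsum_le_tsum_norm (hf.of_nonneg_of_le (fun _ ↦ norm_nonneg _) fun i ↦ ?_)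
  split_ifs <;> simp

theorem summable_and_tsum_le_of_le_geometric {g : ℕ → ℝ} {a r : ℝ} (hg : ∀ m, 0 ≤ g m)
    (hr0 : 0 ≤ r) (hr1 : r < 1) (h : ∀ m, g m ≤ a * r ^ (m + 1)) :
    Summable g ∧ ∑' m, g m ≤ a * (r / (1 - r)) := by
  have hgeom : HasSum (fun m : ℕ ↦ a * r ^ (m + 1)) (a * (r / (1 - r))) := by
    simpa [pow_succ', ← mul_assoc, div_eq_mul_inv] using
      (hasSum_geometric_of_lt_one hr0 hr1).mul_left (a * r)
  have hsum : Summable g := hgeom.summable.of_nonneg_of_le hg h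
  exact ⟨hsum, hasSum_le h hsum.hasSum hgeom⟩

theorem summable_and_tsum_sub_le_of_two_sided_geometric {f : ℤ → ℝ} (K : ℤ) {a q ρ : ℝ}
    (hf : ∀ i, 0 ≤ f i) (hq0 : 0 ≤ q) (hq1 : q < 1) (hρ0 : 0 ≤ ρ) (hρ1 : ρ < 1)
    (hright : ∀ m : ℕ, f (K + (m + 1)) ≤ a * q ^ (m + 1))
    (hleft : ∀ m : ℕ, f (K - (m + 1)) ≤ a * ρ ^ (m + 1)) :
    Summable f ∧ ∑' i, f i - f K ≤ a * (q / (1 - q) + ρ / (1 - ρ)) := by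
  obtain ⟨hR, hRle⟩ := summable_and_tsum_le_of_le_geometric (g := fun m : ℕ ↦ f (K + (m + 1)))
    (fun _ ↦ hf _) hq0 hq1 hright
  obtain ⟨hL, hLle⟩ := summable_and_tsum_le_of_le_geometric (g := fun m : ℕ ↦ f (K - (m + 1)))
    (fun _ ↦ hf _) hρ0 hρ1 hleft
  have hnat : Summable fun m : ℕ ↦ f (K + m) := by
    refine (summable_nat_add_iff 1).mp ?_
    simpa [add_assoc] using hR
  have hneg : ∀ m : ℕ, f (K + -((m : ℤ) + 1)) = f (K - (m + 1)) := fun m ↦ by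
    rw [sub_eq_add_neg]
  have hnegsum : Summable fun m : ℕ ↦ f (K + -((m : ℤ) + 1)) := by
    simpa only [hneg] using hL
  have hshift : Summable fun j ↦ f (K + j) :=
    .of_nat_of_neg_add_one (f := fun j ↦ f (K + j)) hnat hnegsum
  refine ⟨(Equiv.addLeft K).summable_iff.mp hshift, ?_⟩
  have hsplit : ∑' i, f i = f K + ∑' m : ℕ, f (K + (m + 1)) + ∑' m : ℕ, f (K - (m + 1)) :=
    calc ∑' i, f i = ∑' j, f (K + j) := ((Equiv.addLeft K).tsum_eq f).symm
      _ = ∑' m : ℕ, f (K + m) + ∑' m : ℕ, f (K + -((m : ℤ) + 1)) :=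
        tsum_of_nat_of_neg_add_one (f := fun j ↦ f (K + j)) hnat hnegsum
      _ = _ := by
        rw [hnat.tsum_eq_zero_add]
        simp only [hneg, Nat.cast_zero, add_zero, Nat.cast_add, Nat.cast_one]
  linarith

section LaurentTerms

variable {𝕜 E : Type*} [NormedField 𝕜] [SeminormedAddCommGroup E] [NormedSpace 𝕜 E]

theorem norm_zpow_smul_le_of_weighted_le {x y : E} {α w : ℝ} {i K : ℤ} {lam : 𝕜} (hα : 0 < α)
    (hlam : lam ≠ 0) (h : ‖x‖ * α ^ i ≤ ‖y‖ * α ^ K * w) :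
    ‖lam ^ i • x‖ ≤ ‖y‖ * ‖lam‖ ^ K * (w * (‖lam‖ / α) ^ (i - K)) := by
  have hβ : 0 < ‖lam‖ / α := div_pos (norm_pos_iff.mpr hlam) hα
  have hscale : ∀ j : ℤ, ‖lam‖ ^ j = α ^ j * (‖lam‖ / α) ^ j := fun j ↦ by
    rw [div_zpow, mul_div_cancel₀ _ (zpow_ne_zero _ hα.ne')]
  calc ‖lam ^ i • x‖ = ‖x‖ * α ^ i * (‖lam‖ / α) ^ i := by
        rw [norm_smul, norm_zpow, hscale]; ring
    _ ≤ ‖y‖ * α ^ K * w * (‖lam‖ / α) ^ i := by gcongr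
    _ = ‖y‖ * ‖lam‖ ^ K * (w * (‖lam‖ / α) ^ (i - K)) := by
        rw [hscale K, zpow_sub₀ hβ.ne']
        field_simp

variable {B : ℤ → E} {α δ : ℝ} {K : ℤ} {lam : 𝕜}

theorem norm_zpow_smul_sub_succ_le (hα : 0 < α) (hlam : lam ≠ 0)
    (hall : ∀ i, ‖B i‖ * α ^ i ≤ ‖B K‖ * α ^ K) (m : ℕ) :
    ‖lam ^ (K - (m + 1)) • B (K - (m + 1))‖ ≤ ‖B K‖ * ‖lam‖ ^ K * (α / ‖lam‖) ^ (m + 1) := by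
  have h := norm_zpow_smul_le_of_weighted_le (lam := lam) hα hlam
    ((hall (K - (m + 1))).trans_eq (mul_one _).symm)
  have e : K - ((m : ℤ) + 1) - K = -((m + 1 : ℕ) : ℤ) := by push_cast; ring
  rwa [e, zpow_neg, zpow_natCast, ← inv_pow, inv_div, one_mul] at h

theorem norm_zpow_smul_add_succ_le (hα : 0 < α) (hlam : lam ≠ 0)
    (hright : ∀ i, K < i → ‖B i‖ * α ^ i ≤ ‖B K‖ * α ^ K * δ ^ (i - K)) (m : ℕ) :
    ‖lam ^ (K + (m + 1)) • B (K + (m + 1))‖ ≤ ‖B K‖ * ‖lam‖ ^ K * (δ * ‖lam‖ / α) ^ (m + 1) := by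
  have h := norm_zpow_smul_le_of_weighted_le (lam := lam) hα hlam (hright (K + (m + 1)) (by omega))
  have e : K + ((m : ℤ) + 1) - K = ((m + 1 : ℕ) : ℤ) := by push_cast; ring
  rwa [e, zpow_natCast, zpow_natCast, ← mul_pow, ← mul_div_assoc] at h

end LaurentTerms

theorem mul_div_one_sub_lt_half {x c : ℝ} (hx : 0 ≤ x) (hc : 0 ≤ c) (h : x * (1 + 2 * c) < 1) :
    c * (x / (1 - x)) < 1 / 2 := by
  have hx1 : 0 < 1 - x := by nlinarith
  rw [mul_div_assoc', div_lt_div_iff₀ hx1 two_pos]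
  linarith

theorem statement14_general (n : ℕ) (B : ℤ → EucOp n)
    (k K : ℤ) (α δp : ℝ)
    (hα : 0 < α) (hδp0 : 0 < δp)
    (hBKU : IsUnit (B K))
    (hM : ‖B k‖ * α ^ k = ‖B K‖ * α ^ K)
    (hall : ∀ i : ℤ, ‖B i‖ * α ^ i ≤ ‖B k‖ * α ^ k)
    (hright : ∀ i : ℤ, K < i → ‖B i‖ * α ^ i ≤ (‖B k‖ * α ^ k) * δp ^ (i - K))
    (lam : ℂ)
    (hlow : (1 + 2 * kappa (B K)) * α < ‖lam‖)
    (hhigh : ‖lam‖ < (1 + 2 * kappa (B K))⁻¹ * α / δp) :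
    Summable (fun i : ℤ => ‖lam ^ i • B i‖) ∧
    IsUnit (∑' i : ℤ, lam ^ i • B i) := by
  set c := kappa (B K) with hc_def
  rw [hM] at hall hright
  have hc : 0 ≤ c := mul_nonneg (norm_nonneg _) (norm_nonneg _)
  have hlam : 0 < ‖lam‖ := lt_of_le_of_lt (by positivity) hlow
  have hlam0 : lam ≠ 0 := norm_pos_iff.mp hlam
  have hlamK : lam ^ K ≠ 0 := zpow_ne_zero K hlam0
  set ρ := α / ‖lam‖
  set q := δp * ‖lam‖ / α
  have hρ : ρ * (1 + 2 * c) < 1 := by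
    rw [div_mul_eq_mul_div, div_lt_one hlam]; linarith
  have hq : q * (1 + 2 * c) < 1 := by
    rw [lt_div_iff₀ hδp0, inv_mul_eq_div, lt_div_iff₀ (by positivity)] at hhigh
    rw [div_mul_eq_mul_div, div_lt_one hα]; linarith
  have hρ0 : 0 ≤ ρ := by positivity
  have hq0 : 0 ≤ q := by positivity
  obtain ⟨hsum, htail⟩ := summable_and_tsum_sub_le_of_two_sided_geometric
    (f := fun i ↦ ‖lam ^ i • B i‖) K (fun _ ↦ norm_nonneg _) hq0 (by nlinarith) hρ0
    (by nlinarith) (norm_zpow_smul_add_succ_le hα hlam0 hright)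
    (norm_zpow_smul_sub_succ_le hα hlam0 hall)
  refine ⟨hsum, isUnit_tsum_of_dominant hsum (hBKU.smul (Units.mk0 _ hlamK)) ?_⟩
  rw [Ring.inverse_smul_s14 hBKU hlamK, norm_smul, norm_inv, norm_zpow]
  calc (‖lam‖ ^ K)⁻¹ * ‖Ring.inverse (B K)‖ * (∑' i, ‖lam ^ i • B i‖ - ‖lam ^ K • B K‖)
      ≤ (‖lam‖ ^ K)⁻¹ * ‖Ring.inverse (B K)‖ *
          (‖B K‖ * ‖lam‖ ^ K * (q / (1 - q) + ρ / (1 - ρ))) := by gcongr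
    _ = c * (q / (1 - q)) + c * (ρ / (1 - ρ)) := by
        rw [hc_def, kappa]
        field_simp [zpow_ne_zero K hlam.ne']
    _ < 1 / 2 + 1 / 2 :=
        add_lt_add (mul_div_one_sub_lt_half hq0 hc hq) (mul_div_one_sub_lt_half hρ0 hc hρ)
    _ = 1 := by norm_num

/-- eigenvalue exclusion annulus. With `α` a tropical root of
`x ↦ sup_i ‖B_i‖x^i` attained at indices `k < K`, `δ₊` the ratio with the next
tropical root, `c = κ(B_K)` and `δ₊ ≤ (1+2c)^{−2}`, the Laurent series
`F(λ) = ∑_i B_i λ^i` converges absolutely and is invertible for every `λ` in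
the open annulus `(1+2c)α < |λ| < (1+2c)^{−1}α/δ₊`: `F` has no eigenvalue
there. -/
theorem statement14 (n : ℕ) (hn : 1 ≤ n) (B : ℤ → EucOp n)
    (k K : ℤ) (hkK : k < K) (α δm δp : ℝ)
    (hα : 0 < α) (hδm0 : 0 < δm) (hδm1 : δm < 1) (hδp0 : 0 < δp) (hδp1 : δp < 1)
    (hBkU : IsUnit (B k)) (hBKU : IsUnit (B K))
    (hM : ‖B k‖ * α ^ k = ‖B K‖ * α ^ K)
    (hMpos : 0 < ‖B k‖ * α ^ k)
    (hall : ∀ i : ℤ, ‖B i‖ * α ^ i ≤ ‖B k‖ * α ^ k)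
    (hleft : ∀ i : ℤ, i < k → ‖B i‖ * α ^ i ≤ (‖B k‖ * α ^ k) * δm ^ (k - i))
    (hright : ∀ i : ℤ, K < i → ‖B i‖ * α ^ i ≤ (‖B k‖ * α ^ k) * δp ^ (i - K))
    (hsmall : δp ≤ ((1 + 2 * kappa (B K)) ^ 2)⁻¹)
    (lam : ℂ)
    (hlow : (1 + 2 * kappa (B K)) * α < ‖lam‖)
    (hhigh : ‖lam‖ < (1 + 2 * kappa (B K))⁻¹ * α / δp) :
    Summable (fun i : ℤ => ‖lam ^ i • B i‖) ∧
    IsUnit (∑' i : ℤ, lam ^ i • B i) :=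
  statement14_general n B k K α δp hα hδp0 hBKU hM hall hright lam hlow hhigh
end

section
/- Let n ≥ 1, let ℓ ∈ ℤ, let B : {i ∈ ℤ : i ≤ ℓ} → M_n(ℂ), and suppose B_ℓ is invertible and α > 0 is such that ‖B_i‖ ≤ ‖B_ℓ‖·α^{ℓ−i} for all i ≤ ℓ. Then for every λ ∈ ℂ with |λ| > (1 + κ(B_ℓ))·α, the series F(λ) = ∑_{i ≤ ℓ} B_i λ^i converges absolutely and F(λ)x ≠ 0 for every nonzero vector x; in particular F(λ) is invertible, so every eigenvalue λ of F satisfies |λ| ≤ (1 + κ(B_ℓ))·α. -/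
/-
Write `F(λ) = λ^ℓ (B_ℓ + T)` with `T = ∑_{j ≥ 1} λ^{-j} B_{ℓ-j}`. The growth hypothesis gives
`‖λ^{-j} B_{ℓ-j}‖ ≤ ‖B_ℓ‖ r^j` with `r = α/|λ| < 1`, hence `‖T‖ ≤ ‖B_ℓ‖ r/(1-r)` and
`‖B_ℓ⁻¹‖‖T‖ ≤ κ(B_ℓ) r/(1-r)`, which is `< 1` exactly when `|λ| > (1 + κ(B_ℓ)) α`.
A Neumann-series perturbation of the unit `B_ℓ` then shows that `F(λ)` is invertible.
-/

section PerturbationOfUnits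

variable {R : Type*} [NormedRing R] [HasSummableGeomSeries R]

theorem isUnit_add_of_norm_inverse_mul_norm_lt_one {u t : R} (hu : IsUnit u)
    (ht : ‖Ring.inverse u‖ * ‖t‖ < 1) : IsUnit (u + t) := by
  nontriviality R
  obtain ⟨x, rfl⟩ := hu
  rw [Ring.inverse_unit] at ht
  have hx : 0 < ‖(↑x⁻¹ : R)‖ := Units.norm_pos x⁻¹
  exact (x.add t (lt_of_mul_lt_mul_left (by rwa [mul_inv_cancel₀ hx.ne']) hx.le)).isUnit

theorem isUnit_of_hasSum_of_norm_le_geometric {f : ℕ → R} {a : R} {r : ℝ} (ha : HasSum f a)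
    (h0 : IsUnit (f 0)) (hf : ∀ n, ‖f n‖ ≤ ‖f 0‖ * r ^ n)
    (hr : (1 + ‖f 0‖ * ‖Ring.inverse (f 0)‖) * r < 1) : IsUnit a := by
  set κ := ‖f 0‖ * ‖Ring.inverse (f 0)‖
  have hκ : 0 ≤ κ := by positivity
  have hr1 : r < 1 := by nlinarith
  have htail : ‖f 0 - a‖ ≤ ‖f 0‖ * r / (1 - r) := by
    simpa using norm_sub_le_of_geometric_bound_of_hasSum hr1 hf ha 1
  have key : ‖Ring.inverse (f 0)‖ * ‖a - f 0‖ < 1 := by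
    rw [norm_sub_rev]
    calc ‖Ring.inverse (f 0)‖ * ‖f 0 - a‖ ≤ ‖Ring.inverse (f 0)‖ * (‖f 0‖ * r / (1 - r)) := by
          gcongr
      _ = κ * r / (1 - r) := by ring
      _ < 1 := by rw [div_lt_one (by linarith)]; linarith
  simpa using isUnit_add_of_norm_inverse_mul_norm_lt_one h0 key

end PerturbationOfUnits

def natEquivIntLE (ℓ : ℤ) : ℕ ≃ {i : ℤ // i ≤ ℓ} where
  toFun j := ⟨ℓ - j, by omega⟩
  invFun i := (ℓ - i).toNat
  left_inv j := by simp
  right_inv i := Subtype.ext (by have := i.2; simp; omega)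

theorem norm_zpow_neg_smul_le {𝕜 E : Type*} [NormedField 𝕜] [SeminormedAddCommGroup E]
    [NormedSpace 𝕜 E]
    {ℓ : ℤ} {B : ℤ → E} {α : ℝ} (hbd : ∀ i : ℤ, i ≤ ℓ → ‖B i‖ ≤ ‖B ℓ‖ * α ^ (ℓ - i))
    (lam : 𝕜) (j : ℕ) :
    ‖lam ^ (-(j : ℤ)) • B (ℓ - j)‖ ≤ ‖B ℓ‖ * (α / ‖lam‖) ^ j := by
  have hB := hbd (ℓ - j) (by omega)
  rw [sub_sub_cancel, zpow_natCast] at hB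
  rw [norm_smul, norm_zpow, zpow_neg, zpow_natCast, div_pow, div_eq_inv_mul (α ^ j),
    mul_left_comm]
  gcongr

theorem ContinuousLinearMap.ne_zero_of_isUnit {𝕜 E : Type*} [NontriviallyNormedField 𝕜]
    [NormedAddCommGroup E] [NormedSpace 𝕜 E] [CompleteSpace E] {f : E →L[𝕜] E} (hf : IsUnit f)
    {x : E} (hx : x ≠ 0) : f x ≠ 0 :=
  (map_ne_zero_iff f (ContinuousLinearMap.isUnit_iff_bijective.mp hf).injective).mpr hx

theorem statement15_general (n : ℕ) (ℓ : ℤ) (B : ℤ → EucOp n)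
    (hU : IsUnit (B ℓ)) (α : ℝ) (hα : 0 < α)
    (hbd : ∀ i : ℤ, i ≤ ℓ → ‖B i‖ ≤ ‖B ℓ‖ * α ^ (ℓ - i))
    (lam : ℂ) (hlam : (1 + kappa (B ℓ)) * α < ‖lam‖) :
    Summable (fun i : {i : ℤ // i ≤ ℓ} => ‖lam ^ (i : ℤ) • B i‖) ∧
    (∀ x : EuclideanSpace ℂ (Fin n), x ≠ 0 →
      (∑' i : {i : ℤ // i ≤ ℓ}, lam ^ (i : ℤ) • B i) x ≠ 0) ∧
    IsUnit (∑' i : {i : ℤ // i ≤ ℓ}, lam ^ (i : ℤ) • B i) := by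
  have hκ : 0 ≤ kappa (B ℓ) := by unfold kappa; positivity
  have hL : 0 < ‖lam‖ := lt_of_le_of_lt (by positivity) hlam
  have hlam0 : lam ≠ 0 := norm_pos_iff.mp hL
  set r := α / ‖lam‖
  have hr : (1 + kappa (B ℓ)) * r < 1 := by rwa [← mul_div_assoc, div_lt_one hL]
  have hr1 : r < 1 := by nlinarith
  set h : ℕ → EucOp n := fun j => lam ^ (-(j : ℤ)) • B (ℓ - j)
  have hh : ∀ j, ‖h j‖ ≤ ‖B ℓ‖ * r ^ j := norm_zpow_neg_smul_le hbd lam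
  have hsum : Summable (‖h ·‖) := .of_nonneg_of_le (fun _ => norm_nonneg _) hh
    ((summable_geometric_of_lt_one (by positivity) hr1).mul_left _)
  have hreindex : ∀ j, lam ^ (natEquivIntLE ℓ j : ℤ) • B (natEquivIntLE ℓ j) = lam ^ ℓ • h j := by
    intro j
    change lam ^ (ℓ - j) • B (ℓ - j) = lam ^ ℓ • lam ^ (-(j : ℤ)) • B (ℓ - j)
    rw [smul_smul, ← zpow_add₀ hlam0, ← sub_eq_add_neg]
  have hF : ∑' i : {i : ℤ // i ≤ ℓ}, lam ^ (i : ℤ) • B i = lam ^ ℓ • ∑' j, h j := by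
    rw [← (natEquivIntLE ℓ).tsum_eq, tsum_congr hreindex, tsum_const_smul'']
  have hunit : IsUnit (∑' i : {i : ℤ // i ≤ ℓ}, lam ^ (i : ℤ) • B i) := by
    have hsumUnit := isUnit_of_hasSum_of_norm_le_geometric (f := h) hsum.of_norm.hasSum
      (by simpa [h] using hU) (by simpa [h] using hh) (by simpa [h, kappa] using hr)
    rw [hF]
    simpa [Units.smul_def] using hsumUnit.smul (Units.mk0 (lam ^ ℓ) (zpow_ne_zero ℓ hlam0))
  refine ⟨?_, fun x hx => ContinuousLinearMap.ne_zero_of_isUnit hunit hx, hunit⟩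
  rw [← (natEquivIntLE ℓ).summable_iff]
  exact (hsum.mul_left ‖lam ^ ℓ‖).congr fun j => by
    rw [Function.comp_apply, hreindex]; exact (norm_smul _ _).symm

/-- upper bound on the eigenvalues. If `B_ℓ` is invertible,
`α > 0`, and `‖B_i‖ ≤ ‖B_ℓ‖α^{ℓ−i}` for all `i ≤ ℓ`, then for every `λ` with
`|λ| > (1+κ(B_ℓ))α` the series `F(λ) = ∑_{i≤ℓ} B_i λ^i` converges absolutely,
kills no nonzero vector, and is invertible; hence every eigenvalue `λ` of `F`
satisfies `|λ| ≤ (1+κ(B_ℓ))α`. -/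
theorem statement15 (n : ℕ) (hn : 1 ≤ n) (ℓ : ℤ) (B : ℤ → EucOp n)
    (hU : IsUnit (B ℓ)) (α : ℝ) (hα : 0 < α)
    (hbd : ∀ i : ℤ, i ≤ ℓ → ‖B i‖ ≤ ‖B ℓ‖ * α ^ (ℓ - i))
    (lam : ℂ) (hlam : (1 + kappa (B ℓ)) * α < ‖lam‖) :
    Summable (fun i : {i : ℤ // i ≤ ℓ} => ‖lam ^ (i : ℤ) • B i‖) ∧
    (∀ x : EuclideanSpace ℂ (Fin n), x ≠ 0 →
      (∑' i : {i : ℤ // i ≤ ℓ}, lam ^ (i : ℤ) • B i) x ≠ 0) ∧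
    IsUnit (∑' i : {i : ℤ // i ≤ ℓ}, lam ^ (i : ℤ) • B i) :=
  statement15_general n ℓ B hU α hα hbd lam hlam
end

section
/- Let n ≥ 1, let ℓ ∈ ℤ, let B : {i ∈ ℤ : i ≥ ℓ} → M_n(ℂ), and suppose B_ℓ is invertible and α > 0 is such that ‖B_i‖ ≤ ‖B_ℓ‖·α^{ℓ−i} for all i ≥ ℓ. Then for every λ ∈ ℂ with 0 < |λ| < (1 + κ(B_ℓ))^{−1}·α, the series F(λ) = ∑_{i ≥ ℓ} B_i λ^i converges absolutely and F(λ)x ≠ 0 for every nonzero vector x; in particular F(λ) is invertible, so every nonzero eigenvalue λ of F satisfies |λ| ≥ (1 + κ(B_ℓ))^{−1}·α. -/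
theorem isUnit_add_of_norm_inverse_mul_lt_one_s16 {R : Type*} [NormedRing R] [CompleteSpace R]
    {a t : R} (ha : IsUnit a) (h : ‖Ring.inverse a‖ * ‖t‖ < 1) : IsUnit (a + t) := by
  obtain ⟨u, rfl⟩ := ha
  rw [Ring.inverse_unit] at h
  have hsmall : ‖-(↑u⁻¹ * t)‖ < 1 := by
    rw [norm_neg]
    exact (norm_mul_le _ _).trans_lt h
  have hfactor : ↑u + t = ↑u * (1 - -(↑u⁻¹ * t)) := by
    rw [sub_neg_eq_add, mul_add, mul_one, Units.mul_inv_cancel_left]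
  rw [hfactor]
  exact u.isUnit.mul (isUnit_one_sub_of_norm_lt_one hsmall)

theorem norm_tsum_succ_le_of_le_geometric {E : Type*} [SeminormedAddCommGroup E]
    {f : ℕ → E} {C r : ℝ} (hr₀ : 0 ≤ r) (hr₁ : r < 1) (hf : ∀ k, ‖f k‖ ≤ C * r ^ k) :
    ‖∑' k, f (k + 1)‖ ≤ C * r / (1 - r) := by
  have hgeom : HasSum (fun k : ℕ => C * r * r ^ k) (C * r / (1 - r)) := by
    simpa only [div_eq_mul_inv] using (hasSum_geometric_of_lt_one hr₀ hr₁).mul_left (C * r)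
  refine tsum_of_norm_bounded hgeom fun k => ?_
  simpa only [pow_succ', mul_assoc] using hf (k + 1)

def natEquivIntGe (ℓ : ℤ) : ℕ ≃ {i : ℤ // ℓ ≤ i} where
  toFun k := ⟨ℓ + k, by omega⟩
  invFun i := (i - ℓ).toNat
  left_inv k := by simp
  right_inv i := by ext; simp [Int.toNat_of_nonneg (sub_nonneg.mpr i.2)]

section PowerSeries

variable {𝕜 : Type*} [NormedField 𝕜]

theorem norm_pow_smul_le_geometric {E : Type*} [SeminormedAddCommGroup E] [NormedSpace 𝕜 E]
    {b : ℕ → E} {α : ℝ} (hb : ∀ k, ‖b k‖ ≤ ‖b 0‖ / α ^ k) (lam : 𝕜) (k : ℕ) :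
    ‖lam ^ k • b k‖ ≤ ‖b 0‖ * (‖lam‖ / α) ^ k := by
  calc ‖lam ^ k • b k‖ = ‖lam‖ ^ k * ‖b k‖ := by rw [norm_smul, norm_pow]
    _ ≤ ‖lam‖ ^ k * (‖b 0‖ / α ^ k) := by gcongr; exact hb k
    _ = ‖b 0‖ * (‖lam‖ / α) ^ k := by rw [div_pow]; ring

variable {A : Type*} [NormedRing A] [NormedAlgebra 𝕜 A] [CompleteSpace A]

theorem isUnit_tsum_pow_smul {b : ℕ → A} (h0 : IsUnit (b 0)) {α : ℝ} (hα : 0 < α)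
    (hb : ∀ k, ‖b k‖ ≤ ‖b 0‖ / α ^ k) {lam : 𝕜}
    (hlam : ‖lam‖ < (1 + ‖b 0‖ * ‖Ring.inverse (b 0)‖)⁻¹ * α) :
    Summable (fun k => ‖lam ^ k • b k‖) ∧ IsUnit (∑' k, lam ^ k • b k) := by
  set κ := ‖b 0‖ * ‖Ring.inverse (b 0)‖
  set r := ‖lam‖ / α
  have hκ : 0 ≤ κ := by positivity
  have hr₀ : 0 ≤ r := by positivity
  have hrκ : r * (1 + κ) < 1 := by
    rwa [div_mul_eq_mul_div, div_lt_one hα, ← lt_div_iff₀ (by positivity), div_eq_inv_mul]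
  have hr₁ : r < 1 := by nlinarith
  have hterm := norm_pow_smul_le_geometric hb lam
  have hsum : Summable (fun k => ‖lam ^ k • b k‖) :=
    .of_nonneg_of_le (fun _ => norm_nonneg _) hterm
      ((summable_geometric_of_lt_one hr₀ hr₁).mul_left _)
  refine ⟨hsum, ?_⟩
  rw [hsum.of_norm.tsum_eq_zero_add, pow_zero, one_smul]
  refine isUnit_add_of_norm_inverse_mul_lt_one_s16 h0 ?_
  calc ‖Ring.inverse (b 0)‖ * ‖∑' k, lam ^ (k + 1) • b (k + 1)‖
      ≤ ‖Ring.inverse (b 0)‖ * (‖b 0‖ * r / (1 - r)) := by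
        gcongr; exact norm_tsum_succ_le_of_le_geometric hr₀ hr₁ hterm
    _ = κ * r / (1 - r) := by ring
    _ < 1 := by rw [div_lt_one (by linarith)]; linarith

theorem isUnit_tsum_zpow_smul {B : ℤ → A} {ℓ : ℤ} (hU : IsUnit (B ℓ)) {α : ℝ} (hα : 0 < α)
    (hbd : ∀ i, ℓ ≤ i → ‖B i‖ ≤ ‖B ℓ‖ * α ^ (ℓ - i)) {lam : 𝕜} (hlam₀ : lam ≠ 0)
    (hlam : ‖lam‖ < (1 + ‖B ℓ‖ * ‖Ring.inverse (B ℓ)‖)⁻¹ * α) :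
    Summable (fun i : {i : ℤ // ℓ ≤ i} => ‖lam ^ (i : ℤ) • B i‖) ∧
      IsUnit (∑' i : {i : ℤ // ℓ ≤ i}, lam ^ (i : ℤ) • B i) := by
  have hb : ∀ k : ℕ, ‖B (ℓ + k)‖ ≤ ‖B (ℓ + (0 : ℕ))‖ / α ^ k := fun k => by
    simpa [zpow_neg, div_eq_mul_inv] using hbd (ℓ + k) (by omega)
  obtain ⟨hsum, hunit⟩ := isUnit_tsum_pow_smul (b := fun k : ℕ => B (ℓ + k))
    (by simpa using hU) hα hb (by simpa using hlam)
  have hshift : ∀ k : ℕ, lam ^ (ℓ + k) • B (ℓ + k) = lam ^ ℓ • lam ^ k • B (ℓ + k) := fun k => by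
    rw [smul_smul, zpow_add₀ hlam₀, zpow_natCast]
  refine ⟨?_, ?_⟩
  · rw [← (natEquivIntGe ℓ).summable_iff]
    simp only [Function.comp_def, natEquivIntGe, Equiv.coe_fn_mk, hshift, norm_smul _ (_ • _)]
    exact hsum.mul_left _
  · rw [← (natEquivIntGe ℓ).tsum_eq]
    simp only [natEquivIntGe, Equiv.coe_fn_mk, hshift]
    rw [tsum_const_smul'', ← Units.smul_mk0 (zpow_ne_zero ℓ hlam₀)]
    exact hunit.smul _

end PowerSeries

theorem statement16_general (n : ℕ) (ℓ : ℤ) (B : ℤ → EucOp n)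
    (hU : IsUnit (B ℓ)) (α : ℝ) (hα : 0 < α)
    (hbd : ∀ i : ℤ, ℓ ≤ i → ‖B i‖ ≤ ‖B ℓ‖ * α ^ (ℓ - i))
    (lam : ℂ) (hlam0 : 0 < ‖lam‖) (hlam : ‖lam‖ < (1 + kappa (B ℓ))⁻¹ * α) :
    Summable (fun i : {i : ℤ // ℓ ≤ i} => ‖lam ^ (i : ℤ) • B i‖) ∧
    (∀ x : EuclideanSpace ℂ (Fin n), x ≠ 0 →
      (∑' i : {i : ℤ // ℓ ≤ i}, lam ^ (i : ℤ) • B i) x ≠ 0) ∧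
    IsUnit (∑' i : {i : ℤ // ℓ ≤ i}, lam ^ (i : ℤ) • B i) := by
  obtain ⟨hsum, hunit⟩ := isUnit_tsum_zpow_smul hU hα hbd (norm_pos_iff.mp hlam0) hlam
  refine ⟨hsum, fun x hx => ?_, hunit⟩
  simpa only [map_zero] using (ContinuousLinearMap.isUnit_iff_bijective.mp hunit).injective.ne hx

/-- lower bound on the nonzero eigenvalues. If `B_ℓ` is
invertible, `α > 0`, and `‖B_i‖ ≤ ‖B_ℓ‖α^{ℓ−i}` for all `i ≥ ℓ`, then for
every `λ` with `0 < |λ| < (1+κ(B_ℓ))⁻¹α` the series `F(λ) = ∑_{i≥ℓ} B_i λ^i`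
converges absolutely, kills no nonzero vector, and is invertible; hence every
nonzero eigenvalue `λ` of `F` satisfies `|λ| ≥ (1+κ(B_ℓ))⁻¹α`. -/
theorem statement16 (n : ℕ) (hn : 1 ≤ n) (ℓ : ℤ) (B : ℤ → EucOp n)
    (hU : IsUnit (B ℓ)) (α : ℝ) (hα : 0 < α)
    (hbd : ∀ i : ℤ, ℓ ≤ i → ‖B i‖ ≤ ‖B ℓ‖ * α ^ (ℓ - i))
    (lam : ℂ) (hlam0 : 0 < ‖lam‖) (hlam : ‖lam‖ < (1 + kappa (B ℓ))⁻¹ * α) :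
    Summable (fun i : {i : ℤ // ℓ ≤ i} => ‖lam ^ (i : ℤ) • B i‖) ∧
    (∀ x : EuclideanSpace ℂ (Fin n), x ≠ 0 →
      (∑' i : {i : ℤ // ℓ ≤ i}, lam ^ (i : ℤ) • B i) x ≠ 0) ∧
    IsUnit (∑' i : {i : ℤ // ℓ ≤ i}, lam ^ (i : ℤ) • B i) :=
  statement16_general n ℓ B hU α hα hbd lam hlam0 hlam
end

section
/- Let b : ℕ → [0,∞), let R > 0 and C > 0 satisfy b_m ≤ C·R^{−m} for all m > 0, and let i < j be positive integers with b_i > 0, b_j > 0 and b_j > b_i·R^{−(j−i)}. Define ℓ₂ = ((j−i)·log C + i·log b_j − j·log b_i) / ((j−i)·log R + log b_j − log b_i). Assume that for every integer m with j+1 ≤ m ≤ ℓ₂ one has log b_m ≤ ((m−i)·log b_j − (m−j)·log b_i)/(j−i). Then for EVERY integer m > j (with b_m > 0), log b_m ≤ ((m−i)·log b_j − (m−j)·log b_i)/(j−i); that is, every point (m, log b_m) with m > j lies on or below the line through (i, log b_i) and (j, log b_j), so the segment from (i, log b_i) to (j, log b_j) belongs to the upper convex hull of all the points {(m, log b_m)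 : b_m > 0}. -/
/-!
By the decay bound, every point `(m, log b_m)` lies below the line `x ↦ log C - x log R`.
The secant through `(i, log b_i)` and `(j, log b_j)` is steeper than this line, and `ℓ₂` is the
abscissa where the two lines cross; beyond `ℓ₂` the decay line lies below the secant, so only the
finitely many indices `j < m ≤ ℓ₂` need to be checked.
-/

open Real

lemma Real.log_mul_zpow {x R : ℝ} (hx : 0 < x) (hR : 0 < R) (n : ℤ) :
    log (x * R ^ n) = log x + n * log R := by
  rw [log_mul hx.ne' (zpow_pos hR n).ne', log_zpow]

/-- A point below a line of slope `-r` lies below any secant of larger slope, to the right of the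
abscissa where the two lines cross. -/
lemma le_secant_of_le_of_crossing_lt {xi xj yi yj r c x y : ℝ} (hx : xi < xj)
    (hslope : 0 < (xj - xi) * r + yj - yi)
    (hcross : ((xj - xi) * c + xi * yj - xj * yi) / ((xj - xi) * r + yj - yi) < x)
    (hy : y ≤ c - r * x) :
    y ≤ ((x - xi) * yj - (x - xj) * yi) / (xj - xi) := by
  have hdx : 0 < xj - xi := sub_pos.2 hx
  rw [div_lt_iff₀ hslope] at hcross
  rw [le_div_iff₀ hdx]
  linarith [mul_le_mul_of_nonneg_left hy hdx.le]

theorem statement17_general (b : ℕ → ℝ)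
    (R C : ℝ) (hR : 0 < R) (hC : 0 < C)
    (hdecay : ∀ m : ℕ, 0 < m → b m ≤ C * R ^ (-(m : ℤ)))
    (i j : ℕ) (hij : i < j)
    (hbi : 0 < b i)
    (hslope : b i * R ^ (-((j : ℤ) - (i : ℤ))) < b j)
    (hcheck : ∀ m : ℕ, j + 1 ≤ m →
      (m : ℝ) ≤ (((j : ℝ) - i) * Real.log C + i * Real.log (b j)
          - j * Real.log (b i)) /
        (((j : ℝ) - i) * Real.log R + Real.log (b j) - Real.log (b i)) →
      Real.log (b m) ≤
        (((m : ℝ) - i) * Real.log (b j) - ((m : ℝ) - j) * Real.log (b i)) /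
          ((j : ℝ) - i)) :
    ∀ m : ℕ, j < m → 0 < b m →
      Real.log (b m) ≤
        (((m : ℝ) - i) * Real.log (b j) - ((m : ℝ) - j) * Real.log (b i)) /
          ((j : ℝ) - i) := by
  intro m hm hbm
  by_cases hsmall : (m : ℝ) ≤ (((j : ℝ) - i) * log C + i * log (b j) - j * log (b i)) /
      (((j : ℝ) - i) * log R + log (b j) - log (b i))
  · exact hcheck m hm hsmall
  have hsecant : 0 < ((j : ℝ) - i) * log R + log (b j) - log (b i) := by
    have h := log_lt_log (by positivity) hslope
    rw [log_mul_zpow hbi hR] at h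
    push_cast at h
    linarith
  have hbound : log (b m) ≤ log C - log R * m := by
    have h := log_le_log hbm (hdecay m (by omega))
    rw [log_mul_zpow hC hR] at h
    push_cast at h
    linarith
  exact le_secant_of_le_of_crossing_lt (by exact_mod_cast hij) hsecant (not_le.1 hsmall) hbound

/-- truncation of the Newton polygon. If `b_m ≤ C·R^{−m}` for all
`m > 0`, the segment from `(i, log b_i)` to `(j, log b_j)` has slope greater
than `−log R` (i.e. `b_j > b_i R^{−(j−i)}`), and every point `(m, log b_m)`
with `j+1 ≤ m ≤ ℓ₂` lies on or below the line through `(i, log b_i)` and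
`(j, log b_j)`, then every point `(m, log b_m)` with `m > j` (and `b_m > 0`)
lies on or below that line: the segment belongs to the upper convex hull. -/
theorem statement17 (b : ℕ → ℝ) (hb : ∀ m, 0 ≤ b m)
    (R C : ℝ) (hR : 0 < R) (hC : 0 < C)
    (hdecay : ∀ m : ℕ, 0 < m → b m ≤ C * R ^ (-(m : ℤ)))
    (i j : ℕ) (hi : 0 < i) (hij : i < j)
    (hbi : 0 < b i) (hbj : 0 < b j)
    (hslope : b i * R ^ (-((j : ℤ) - (i : ℤ))) < b j)
    (hcheck : ∀ m : ℕ, j + 1 ≤ m →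
      (m : ℝ) ≤ (((j : ℝ) - i) * Real.log C + i * Real.log (b j)
          - j * Real.log (b i)) /
        (((j : ℝ) - i) * Real.log R + Real.log (b j) - Real.log (b i)) →
      Real.log (b m) ≤
        (((m : ℝ) - i) * Real.log (b j) - ((m : ℝ) - j) * Real.log (b i)) /
          ((j : ℝ) - i)) :
    ∀ m : ℕ, j < m → 0 < b m →
      Real.log (b m) ≤
        (((m : ℝ) - i) * Real.log (b j) - ((m : ℝ) - j) * Real.log (b i)) /
          ((j : ℝ) - i) :=
  statement17_general b R C hR hC hdecay i j hij hbi hslope hcheck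
end

section
/- Let b : ℕ → [0,∞) with b_j > 0 for infinitely many j ≥ 1, let γ > 0 and α > 0, and assume that the sequence (b_j·α^j), restricted to the indices j ≥ 1 with b_j > 0, is nondecreasing and satisfies b_j·α^j ≤ γ for all such j. Define b̂_0 = γ and b̂_j = b_j for j ≥ 1. Then sup_{j ≥ 0} b̂_j·x^j = γ for every x ∈ [0, α], while sup_{j ≥ 0} b̂_j·x^j = +∞ for every x > α. In particular, the domain of the max-times tropical series x ↦ sup_j b̂_j x^j is [0, α], 0 is its only vertex index among the nonnegative indices, and α is a tropical root of infinite multiplicity. -/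
open Filter Set

lemma mul_pow_le_of_mul_pow_le {b x α γ : ℝ} {j : ℕ} (hx : 0 ≤ x) (hxα : x ≤ α) (hγ : 0 ≤ γ)
    (h : 0 < b → b * α ^ j ≤ γ) : b * x ^ j ≤ γ := by
  rcases le_or_gt b 0 with hb | hb
  · exact (mul_nonpos_of_nonpos_of_nonneg hb (pow_nonneg hx j)).trans hγ
  · exact (mul_le_mul_of_nonneg_left (pow_le_pow_left₀ hx hxα j) hb.le).trans (h hb)

/-- `f j x ^ j = f j α ^ j (x / α) ^ j`, and the last factor tends to infinity. -/
lemma not_bddAbove_range_mul_pow {f : ℕ → ℝ} {c α x : ℝ} (hc : 0 < c) (hα : 0 < α)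
    (hx : α < x) (hf : ∃ᶠ j in atTop, c ≤ f j * α ^ j) :
    ¬ BddAbove (range fun j => f j * x ^ j) := by
  rintro ⟨M, hM⟩
  have hgrowth : Tendsto (fun j : ℕ => c * (x / α) ^ j) atTop atTop :=
    (tendsto_pow_atTop_atTop_of_one_lt ((one_lt_div hα).2 hx)).const_mul_atTop hc
  obtain ⟨j, hcj, hMj⟩ := (hf.and_eventually (hgrowth.eventually_gt_atTop M)).exists
  have hsplit : f j * x ^ j = f j * α ^ j * (x / α) ^ j := by
    rw [mul_assoc, ← mul_pow, mul_div_cancel₀ x hα.ne']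
  have hle : c * (x / α) ^ j ≤ f j * x ^ j := by
    rw [hsplit]
    exact mul_le_mul_of_nonneg_right hcj (pow_nonneg (div_nonneg (hα.trans hx).le hα.le) j)
  exact (hMj.trans_le hle).not_ge (hM ⟨j, rfl⟩)

theorem statement18_general (b : ℕ → ℝ)
    (hinf : {j : ℕ | 1 ≤ j ∧ 0 < b j}.Infinite)
    (γ α : ℝ) (hγ : 0 < γ) (hα : 0 < α)
    (hmono : ∀ j k' : ℕ, 1 ≤ j → j ≤ k' → 0 < b j → 0 < b k' →
      b j * α ^ j ≤ b k' * α ^ k')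
    (hbdd : ∀ j : ℕ, 1 ≤ j → 0 < b j → b j * α ^ j ≤ γ) :
    (∀ x : ℝ, 0 ≤ x → x ≤ α →
      (⨆ j : ℕ, (if j = 0 then γ else b j) * x ^ j) = γ) ∧
    (∀ x : ℝ, α < x →
      ¬ BddAbove (Set.range fun j : ℕ => (if j = 0 then γ else b j) * x ^ j)) := by
  constructor
  · intro x hx hxα
    have hub : ∀ j : ℕ, (if j = 0 then γ else b j) * x ^ j ≤ γ := by
      rintro (_ | j)
      · simp
      · exact mul_pow_le_of_mul_pow_le hx hxα hγ.le (hbdd _ j.succ_pos)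
    exact le_antisymm (ciSup_le hub) (le_ciSup_of_le ⟨γ, forall_mem_range.2 hub⟩ 0 (by simp))
  · intro x hx
    obtain ⟨j₀, hj₀, hbj₀⟩ := hinf.nonempty
    have hfreq : ∃ᶠ j in atTop, 1 ≤ j ∧ 0 < b j := Nat.frequently_atTop_iff_infinite.2 hinf
    refine not_bddAbove_range_mul_pow (mul_pos hbj₀ (pow_pos hα j₀)) hα hx ?_
    refine (hfreq.and_eventually (eventually_ge_atTop j₀)).mono ?_
    rintro j ⟨⟨hj, hbj⟩, hj₀j⟩
    rw [if_neg (by omega)]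
    exact hmono j₀ j hj₀ hj₀j hbj₀ hbj

/-- degenerate Graham-scan update. If infinitely many `b_j` with
`j ≥ 1` are positive, the values `b_j α^j` (over positive indices with
`b_j > 0`) are nondecreasing and bounded by `γ`, and we set `b̂_0 = γ`,
`b̂_j = b_j` for `j ≥ 1`, then `sup_j b̂_j x^j = γ` for `0 ≤ x ≤ α` while the
supremum is `+∞` (the family is unbounded) for `x > α`: the domain of the
updated tropical series is `[0, α]` and `α` is a root of infinite
multiplicity. -/
theorem statement18 (b : ℕ → ℝ) (hb : ∀ j, 0 ≤ b j)
    (hinf : {j : ℕ | 1 ≤ j ∧ 0 < b j}.Infinite)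
    (γ α : ℝ) (hγ : 0 < γ) (hα : 0 < α)
    (hmono : ∀ j k' : ℕ, 1 ≤ j → j ≤ k' → 0 < b j → 0 < b k' →
      b j * α ^ j ≤ b k' * α ^ k')
    (hbdd : ∀ j : ℕ, 1 ≤ j → 0 < b j → b j * α ^ j ≤ γ) :
    (∀ x : ℝ, 0 ≤ x → x ≤ α →
      (⨆ j : ℕ, (if j = 0 then γ else b j) * x ^ j) = γ) ∧
    (∀ x : ℝ, α < x →
      ¬ BddAbove (Set.range fun j : ℕ => (if j = 0 then γ else b j) * x ^ j)) :=
  statement18_general b hinf γ α hγ hα hmono hbdd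
end

section
/- Let (j_i)_{i∈ℕ} be a strictly increasing sequence of positive integers, let (y_i)_{i∈ℕ} be real numbers such that the slopes t_i := (y_{i+1} − y_i)/(j_{i+1} − j_i) tend to −∞ as i → ∞, and let γ ∈ ℝ. Then there exists an index i such that (y_i − γ)/j_i ≥ t_i. (Consequently, the Graham-scan update of the Newton polygon with vertices (j_i, y_i) by the new node (0, γ) terminates within a finite number of slope comparisons.) -/
/-!
Suppose the scan never stops, i.e. `s i < t i` for every `i`, where `s i = (y i - γ) / j i`.
The slope `s (i + 1)` from `(0, γ)` to `(j (i + 1), y (i + 1))` is the mediant of `s i` and `t i`,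
so it exceeds `s i`. Hence `s` is increasing and `t i > s i ≥ s 0` for all `i`, contradicting
`t i → -∞`.
-/

open Filter

theorem div_lt_add_div_add_of_div_lt_div {K : Type*} [Field K] [LinearOrder K]
    [IsStrictOrderedRing K] {a b c d : K} (hb : 0 < b) (hd : 0 < d) (h : a / b < c / d) :
    a / b < (a + c) / (b + d) := by
  rw [div_lt_div_iff₀ hb hd] at h
  rw [div_lt_div_iff₀ hb (add_pos hb hd)]
  linarith

/-- termination of the Graham-scan update. If `(j_i, y_i)` are
the vertices of a Newton polygon with strictly increasing positive abscissas
`j_i` and segment slopes `t_i = (y_{i+1} − y_i)/(j_{i+1} − j_i)` tending to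
`−∞`, then for any new node `(0, γ)` there is an index `i` at which the scan
stops: the slope `(y_i − γ)/j_i` is at least `t_i`. -/
theorem statement19 (j : ℕ → ℕ) (hj : StrictMono j) (hjpos : ∀ i, 0 < j i)
    (y : ℕ → ℝ)
    (ht : Tendsto (fun i : ℕ =>
      (y (i + 1) - y i) / ((j (i + 1) : ℝ) - (j i : ℝ))) atTop atBot)
    (γ : ℝ) :
    ∃ i : ℕ, (y (i + 1) - y i) / ((j (i + 1) : ℝ) - (j i : ℝ)) ≤
      (y i - γ) / (j i : ℝ) := by
  by_contra! hlt
  have hmono : Monotone fun i => (y i - γ) / (j i : ℝ) := by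
    refine monotone_nat_of_le_succ fun i => ?_
    have hgap : (0 : ℝ) < j (i + 1) - j i := sub_pos.mpr (by exact_mod_cast hj i.lt_succ_self)
    have hmediant := div_lt_add_div_add_of_div_lt_div (by exact_mod_cast hjpos i) hgap (hlt i)
    rw [sub_add_sub_cancel', add_sub_cancel] at hmediant
    exact hmediant.le
  obtain ⟨i, hi⟩ := (ht.eventually (eventually_lt_atBot ((y 0 - γ) / (j 0 : ℝ)))).exists
  exact (hi.trans_le (hmono i.zero_le)).not_gt (hlt i)
end
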